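/- arXiv:1908.10665 — 9 statements merged into one kernel-verified Lean document; each statement's English description precedes it below -/
import Mathlib

section
/- Let G be a countable group, I and Λ nonempty countable sets, P : Λ × I → G a matrix, and let S = M[G;I,Λ;P] be a normalised Rees matrix semigroup. If S is homogeneous as a completely simple semigroup, then G is a homogeneous group and the subsemigroup ⟨E(S)⟩ generated by the idempotents of S is homogeneous as a completely simple semigroup. -/
section CSDefs

variable {S : Type*}

/-- Closure of a subset under a binary operation `op` and a unary operation `star`. -/
inductive CSClosure (op : S → S → S) (star : S → S) (X : Set S) : S → Prop
  | base {x : S} : x ∈ X → CSClosure op star X x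
  | mul {x y : S} : CSClosure op star X x → CSClosure op star X y →
      CSClosure op star X (op x y)
  | inv {x : S} : CSClosure op star X x → CSClosure op star X (star x)

/-- Homogeneity as a completely simple semigroup, for the completely simple semigroup with
carrier `S`, multiplication `op` and unary operation `star` (inversion in the maximal
subgroup): every multiplication-preserving bijection between finitely generated
`(op, star)`-closed subsemigroups extends to an automorphism of `S`. -/
def IsCSHomogeneous (op : S → S → S) (star : S → S) : Prop :=
  ∀ (X Y : Finset S) (φ : S → S),
    Set.BijOn φ {s | CSClosure op star (X : Set S) s} {s | CSClosure op star (Y : Set S) s} →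
    (∀ x y : S, CSClosure op star (X : Set S) x → CSClosure op star (X : Set S) y →
      φ (op x y) = op (φ x) (φ y)) →
    ∃ Φ : S → S, Function.Bijective Φ ∧
      (∀ x y : S, Φ (op x y) = op (Φ x) (Φ y)) ∧
      ∀ x : S, CSClosure op star (X : Set S) x → Φ x = φ x

end CSDefs

/-- A countable group is homogeneous if every isomorphism between finitely generated
subgroups extends to an automorphism. -/
def IsHomogeneousGroup (G : Type*) [Group G] : Prop :=
  ∀ (A B : Subgroup G), A.FG → B.FG → ∀ e : A ≃* B,
    ∃ Φ : G ≃* G, ∀ a : A, Φ (a : G) = ((e a : B) : G)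

section Rees

variable {G H I Λ J M : Type*} [Group G] [Group H]

/-- Multiplication of the Rees matrix semigroup `M[G;I,Λ;P]`. -/
def reesMul (P : Λ → I → G) (x y : I × G × Λ) : I × G × Λ :=
  (x.1, x.2.1 * P x.2.2 y.1 * y.2.1, y.2.2)

/-- The unary operation on `M[G;I,Λ;P]` sending an element to its inverse in its
maximal subgroup. -/
def reesInv (P : Λ → I → G) (x : I × G × Λ) : I × G × Λ :=
  (x.1, (P x.2.2 x.1)⁻¹ * x.2.1⁻¹ * (P x.2.2 x.1)⁻¹, x.2.2)

/-- The set `G^P` of entries of the sandwich matrix `P`. -/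
def reesEntries (P : Λ → I → G) : Set G := {g | ∃ l i, P l i = g}

/-- The sandwich matrix `P` viewed as a matrix over the subgroup `⟨G^P⟩` generated by its
entries; the Rees matrix semigroup over it is the idempotent-generated subsemigroup
`⟨E(S)⟩ = I × ⟨G^P⟩ × Λ` of `M[G;I,Λ;P]` (for normalised `P`). -/
def reesEntriesMatrix (P : Λ → I → G) : Λ → I → ↥(Subgroup.closure (reesEntries P)) :=
  fun l i => ⟨P l i, Subgroup.subset_closure ⟨l, i, rfl⟩⟩

/-- The map `[θ, ψ, u, v]` between Rees matrix semigroups. -/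
def reesMap (θ : G →* H) (ψI : I → J) (ψΛ : Λ → M) (u : I → H) (v : Λ → H) :
    I × G × Λ → J × H × M :=
  fun x => (ψI x.1, u x.1 * θ x.2.1 * v x.2.2, ψΛ x.2.2)

end Rees

/-- The set `A` forms a characteristic subgroup of `G`: it is a subgroup (contains the
identity and is closed under products and inverses) and is invariant under every
automorphism of `G`. -/
def IsCharacteristicSubgroupSet {G : Type*} [Group G] (A : Set G) : Prop :=
  1 ∈ A ∧ (∀ a ∈ A, ∀ b ∈ A, a * b ∈ A) ∧ (∀ a ∈ A, a⁻¹ ∈ A) ∧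
    ∀ θ : G ≃* G, θ '' A = A

/-- Homogeneity of a complete edge-coloured bipartite graph with left set `L`,
right set `R` and colouring function `F`. -/
def IsHomogeneousBipartite {L R C : Type*} (F : L → R → C) : Prop :=
  ∀ (A : Finset L) (B : Finset R) (α : L → L) (β : R → R),
    Set.InjOn α ↑A → Set.InjOn β ↑B →
    (∀ a ∈ A, ∀ b ∈ B, F (α a) (β b) = F a b) →
    ∃ (α' : Equiv.Perm L) (β' : Equiv.Perm R),
      (∀ a ∈ A, α' a = α a) ∧ (∀ b ∈ B, β' b = β b) ∧
      ∀ (x : L) (y : R), F (α' x) (β' y) = F x y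

/-!
The idempotent `e = (iI, 1, lL)` has `ℋ`-class `{iI} × G × {lL}`, a copy of `G` on which the
normalisation makes the Rees multiplication the group multiplication. A finitely generated
subgroup of `G` is thus a finitely generated completely simple subsemigroup of this copy
containing `e`, so an isomorphism of such subgroups extends to an automorphism `Φ` of `S`
fixing `e`; as `x ↦ e x e` retracts `S` onto the copy, `Φ` maps it onto itself and restricts to
an automorphism of `G`.

For `⟨E(S)⟩ = I × ⟨G^P⟩ × Λ`, finitely generated completely simple subsemigroups and their
isomorphisms are also those of `S`; an automorphism of `S` extending such an isomorphism
permutes the idempotents, hence preserves `⟨E(S)⟩` and restricts to it.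
-/

namespace CSClosure

variable {S T : Type*} {op : S → S → S} {star : S → S} {op' : T → T → T} {star' : T → T}

theorem map (f : S → T) (hop : ∀ x y, f (op x y) = op' (f x) (f y))
    (hstar : ∀ x, f (star x) = star' (f x)) {X : Set S} {Y : Set T} (hXY : Set.MapsTo f X Y)
    {x : S} (hx : CSClosure op star X x) : CSClosure op' star' Y (f x) := by
  induction hx with
  | base hx => exact .base (hXY hx)
  | mul _ _ ihx ihy => exact hop _ _ ▸ .mul ihx ihy
  | inv _ ih => exact hstar _ ▸ .inv ih

theorem setOf_image (f : S → T) (hop : ∀ x y, f (op x y) = op' (f x) (f y))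
    (hstar : ∀ x, f (star x) = star' (f x)) (X : Set S) :
    {t | CSClosure op' star' (f '' X) t} = f '' {s | CSClosure op star X s} := by
  refine Set.Subset.antisymm (fun t ht => ?_) ?_
  · induction ht with
    | base hx =>
      obtain ⟨s, hs, rfl⟩ := hx
      exact ⟨s, .base hs, rfl⟩
    | mul _ _ ihx ihy =>
      obtain ⟨a, ha, rfl⟩ := ihx
      obtain ⟨b, hb, rfl⟩ := ihy
      exact ⟨op a b, .mul ha hb, hop a b⟩
    | inv _ ih =>
      obtain ⟨a, ha, rfl⟩ := ih
      exact ⟨star a, .inv ha, hstar a⟩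
  · rintro _ ⟨s, hs, rfl⟩
    exact map f hop hstar (Set.mapsTo_image f X) hs

end CSClosure

theorem setOf_cSClosure_insert_one {G : Type*} [Group G] (T : Set G) :
    {g | CSClosure (· * ·) (·⁻¹) (insert 1 T) g} = Subgroup.closure T := by
  ext g
  refine ⟨fun hg => ?_, fun hg => ?_⟩
  · induction hg with
    | base hx => exact hx.elim (· ▸ one_mem _) (Subgroup.subset_closure ·)
    | mul _ _ ihx ihy => exact mul_mem ihx ihy
    | inv _ ih => exact inv_mem ih
  · induction hg using Subgroup.closure_induction with
    | mem x hx => exact .base (Set.mem_insert_of_mem _ hx)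
    | one => exact .base (Set.mem_insert _ _)
    | mul _ _ _ _ ihx ihy => exact .mul ihx ihy
    | inv _ _ ih => exact .inv ih

section Extend

open Function

variable {α α' β : Type*} {f : α → β} {f' : α' → β} {φ : α → α'}

theorem Set.BijOn.extend_comp (hf : Injective f) (hf' : Injective f') {s : Set α} {t : Set α'}
    (h : Set.BijOn φ s t) : Set.BijOn (extend f (f' ∘ φ) id) (f '' s) (f' '' t) := by
  refine ⟨?_, ?_, ?_⟩
  · rintro _ ⟨a, ha, rfl⟩
    exact ⟨φ a, h.mapsTo ha, (hf.extend_apply (f' ∘ φ) id a).symm⟩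
  · rintro _ ⟨a, ha, rfl⟩ _ ⟨b, hb, rfl⟩ hab
    simp only [hf.extend_apply, comp_apply] at hab
    rw [h.injOn ha hb (hf' hab)]
  · rintro _ ⟨b, hb, rfl⟩
    obtain ⟨a, ha, rfl⟩ := h.surjOn hb
    exact ⟨f a, ⟨a, ha, rfl⟩, hf.extend_apply _ _ a⟩

theorem extend_comp_map_op (hf : Injective f) {op₁ : α → α → α} {op₂ : α' → α' → α'}
    {op : β → β → β} (hop₁ : ∀ a b, f (op₁ a b) = op (f a) (f b))
    (hop₂ : ∀ a b, f' (op₂ a b) = op (f' a) (f' b)) {s : Set α}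
    (hφ : ∀ a ∈ s, ∀ b ∈ s, φ (op₁ a b) = op₂ (φ a) (φ b)) :
    ∀ x ∈ f '' s, ∀ y ∈ f '' s,
      extend f (f' ∘ φ) id (op x y) = op (extend f (f' ∘ φ) id x) (extend f (f' ∘ φ) id y) := by
  rintro _ ⟨a, ha, rfl⟩ _ ⟨b, hb, rfl⟩
  simp only [← hop₁, hf.extend_apply, comp_apply, hφ a ha b hb, hop₂]

end Extend

open Function in
theorem IsCSHomogeneous.of_embedding {S T : Type*} {op : T → T → T} {star : T → T}
    {op' : S → S → S} {star' : S → S} (f : T → S) (hf : Injective f)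
    (hop : ∀ x y, f (op x y) = op' (f x) (f y)) (hstar : ∀ x, f (star x) = star' (f x))
    (hrange : ∀ Φ : S → S, (∀ x y, Φ (op' x y) = op' (Φ x) (Φ y)) →
      Set.MapsTo Φ (Set.range f) (Set.range f))
    (h : IsCSHomogeneous op' star') : IsCSHomogeneous op star := by
  classical
  intro X Y φ hφ hφop
  have hclosure : ∀ Z : Finset T, {s | CSClosure op' star' ↑(Z.image f) s} =
      f '' {t | CSClosure op star ↑Z t} := fun Z => by
    rw [Finset.coe_image]; exact CSClosure.setOf_image f hop hstar _
  have hmem : ∀ x, CSClosure op' star' ↑(X.image f) x → x ∈ f '' {t | CSClosure op star X t} :=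
    fun x hx => hclosure X ▸ hx
  obtain ⟨Φ, hΦ, hΦop, hΦφ⟩ := h (X.image f) (Y.image f) (extend f (f ∘ φ) id)
    (by simpa only [hclosure] using hφ.extend_comp hf hf)
    (fun x y hx hy => extend_comp_map_op hf hop hop (fun a ha b hb => hφop a b ha hb)
      x (hmem x hx) y (hmem y hy))
  set Ψ := (Equiv.ofBijective Φ hΦ).symm
  have hΨop : ∀ x y, Ψ (op' x y) = op' (Ψ x) (Ψ y) := fun x y => hΦ.1 <| by
    simp only [hΦop, Ψ, Equiv.ofBijective_apply_symm_apply]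
  choose Φt hΦt using fun t => hrange Φ hΦop (Set.mem_range_self t)
  refine ⟨Φt, ⟨fun a b hab => hf (hΦ.1 ?_), fun t => ?_⟩, fun x y => hf ?_, fun x hx => hf ?_⟩
  · rw [← hΦt, ← hΦt, hab]
  · obtain ⟨s, hs⟩ := hrange Ψ hΨop (Set.mem_range_self t)
    refine ⟨s, hf ?_⟩
    rw [hΦt, hs, Equiv.ofBijective_apply_symm_apply Φ hΦ]
  · rw [hΦt, hop, hΦop, hop, hΦt, hΦt]
  · have hfx : f x ∈ {s | CSClosure op' star' ↑(X.image f) s} := hclosure X ▸ ⟨x, hx, rfl⟩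
    rw [hΦt, hΦφ _ hfx, hf.extend_apply, comp_apply]

section Rees

open Function

variable {G I Λ : Type*}

def reesCorner (i : I) (l : Λ) (g : G) : I × G × Λ := (i, g, l)

theorem reesCorner_injective (i : I) (l : Λ) : Injective (reesCorner i l : G → I × G × Λ) :=
  fun _ _ h => congrArg (·.2.1) h

variable [Group G] {P : Λ → I → G}

theorem reesCorner_mul {i : I} {l : Λ} (hP : P l i = 1) (g h : G) :
    reesCorner i l (g * h) = reesMul P (reesCorner i l g) (reesCorner i l h) := by
  simp [reesMul, reesCorner, hP]

theorem reesCorner_inv {i : I} {l : Λ} (hP : P l i = 1) (g : G) :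
    reesCorner i l g⁻¹ = reesInv P (reesCorner i l g) := by
  simp [reesInv, reesCorner, hP]

theorem setOf_cSClosure_reesCorner_image {i : I} {l : Λ} (hP : P l i = 1) (T : Set G) :
    {x | CSClosure (reesMul P) (reesInv P) (reesCorner i l '' insert 1 T) x} =
      reesCorner i l '' Subgroup.closure T := by
  rw [CSClosure.setOf_image _ (reesCorner_mul hP) (reesCorner_inv hP),
    setOf_cSClosure_insert_one]

variable {iI : I} {lL : Λ}

theorem reesMul_sandwich (hrow : ∀ j : I, P lL j = 1) (hcol : ∀ m : Λ, P m iI = 1)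
    (i : I) (l : Λ) (x : I × G × Λ) :
    reesMul P (reesMul P (reesCorner i lL 1) x) (reesCorner iI l 1) = reesCorner i l x.2.1 := by
  simp [reesMul, reesCorner, hrow, hcol]

theorem exists_mulEquiv_of_map_reesCorner_one (hrow : ∀ j : I, P lL j = 1)
    (hcol : ∀ m : Λ, P m iI = 1) {Φ : I × G × Λ → I × G × Λ} (hΦ : Bijective Φ)
    (hΦop : ∀ x y, Φ (reesMul P x y) = reesMul P (Φ x) (Φ y))
    (hΦ1 : Φ (reesCorner iI lL 1) = reesCorner iI lL 1) :
    ∃ θ : G ≃* G, ∀ g, Φ (reesCorner iI lL g) = reesCorner iI lL (θ g) := by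
  have hsandwich : ∀ x, Φ (reesCorner iI lL x.2.1) = reesCorner iI lL (Φ x).2.1 := fun x => by
    rw [← reesMul_sandwich hrow hcol, hΦop, hΦop, hΦ1, reesMul_sandwich hrow hcol]
  set θ : G → G := fun g => (Φ (reesCorner iI lL g)).2.1
  have hθ : ∀ g, Φ (reesCorner iI lL g) = reesCorner iI lL (θ g) := fun g => hsandwich (iI, g, lL)
  have hθmul : ∀ g h, θ (g * h) = θ g * θ h := fun g h => reesCorner_injective iI lL <| by
    rw [← hθ, reesCorner_mul (hcol lL), hΦop, hθ, hθ, reesCorner_mul (hcol lL)]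
  have hθinj : Injective θ := fun g h hgh =>
    reesCorner_injective iI lL (hΦ.1 (by rw [hθ, hθ, hgh]))
  have hθsurj : Surjective θ := fun h => by
    obtain ⟨x, hx⟩ := hΦ.2 (reesCorner iI lL h)
    exact ⟨x.2.1, reesCorner_injective iI lL (by rw [← hθ, hsandwich, hx]; rfl)⟩
  exact ⟨MulEquiv.ofBijective (MonoidHom.mk' θ hθmul) ⟨hθinj, hθsurj⟩, hθ⟩

theorem isHomogeneousGroup_of_isCSHomogeneous (hrow : ∀ j : I, P lL j = 1)
    (hcol : ∀ m : Λ, P m iI = 1) (hhom : IsCSHomogeneous (reesMul P) (reesInv P)) :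
    IsHomogeneousGroup G := by
  classical
  rintro A B ⟨TA, hTA⟩ ⟨TB, hTB⟩ e
  have hclosure : ∀ (T : Finset G) (H : Subgroup G), Subgroup.closure (T : Set G) = H →
      {x | CSClosure (reesMul P) (reesInv P) ↑((insert 1 T).image (reesCorner iI lL)) x} =
        Set.range (reesCorner iI lL ∘ Subtype.val : H → I × G × Λ) := by
    rintro T H rfl
    rw [Finset.coe_image, Finset.coe_insert, setOf_cSClosure_reesCorner_image (hcol lL),
      Set.range_comp, Subtype.range_coe]
  have hinj : ∀ H : Subgroup G, Injective (reesCorner iI lL ∘ Subtype.val : H → I × G × Λ) :=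
    fun H => (reesCorner_injective iI lL).comp Subtype.val_injective
  have hmul : ∀ (H : Subgroup G) (a b : H), reesCorner iI lL ((a * b : H) : G) =
      reesMul P (reesCorner iI lL a) (reesCorner iI lL b) := fun H a b =>
    reesCorner_mul (hcol lL) a b
  have hX := Set.ext_iff.mp (hclosure TA A hTA)
  set φ := extend (reesCorner iI lL ∘ Subtype.val : A → I × G × Λ)
    ((reesCorner iI lL ∘ Subtype.val : B → I × G × Λ) ∘ e) id
  have hφ : ∀ a : A, φ (reesCorner iI lL a) = reesCorner iI lL ((e a : B) : G) :=
    (hinj A).extend_apply _ _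
  obtain ⟨Φ, hΦ, hΦop, hΦφ⟩ :=
    hhom ((insert 1 TA).image (reesCorner iI lL)) ((insert 1 TB).image (reesCorner iI lL)) φ
    (by
      rw [hclosure TA A hTA, hclosure TB B hTB, ← Set.image_univ, ← Set.image_univ]
      exact e.bijective.bijOn_univ.extend_comp (hinj A) (hinj B))
    (fun x y hx hy => extend_comp_map_op (hinj A) (hmul A) (hmul B) (s := Set.univ)
      (fun a _ b _ => map_mul e a b) x (Set.image_univ ▸ (hX x).mp hx)
      y (Set.image_univ ▸ (hX y).mp hy))
  have hΦe : ∀ a : A, Φ (reesCorner iI lL a) = reesCorner iI lL ((e a : B) : G) := fun a =>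
    (hΦφ _ ((hX _).mpr ⟨a, rfl⟩)).trans (hφ a)
  obtain ⟨θ, hθ⟩ := exists_mulEquiv_of_map_reesCorner_one hrow hcol hΦ hΦop
    (by simpa using hΦe 1)
  exact ⟨θ, fun a => reesCorner_injective iI lL ((hθ a).symm.trans (hΦe a))⟩

variable (P) in
def reesEntriesEmbedding (x : I × Subgroup.closure (reesEntries P) × Λ) : I × G × Λ :=
  (x.1, x.2.1, x.2.2)

theorem reesEntriesEmbedding_injective : Injective (reesEntriesEmbedding P) :=
  fun _ _ h => Prod.ext (congrArg (·.1) h)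
    (Prod.ext (Subtype.ext (congrArg (·.2.1) h)) (congrArg (·.2.2) h))

theorem reesEntriesEmbedding_mul (x y : I × Subgroup.closure (reesEntries P) × Λ) :
    reesEntriesEmbedding P (reesMul (reesEntriesMatrix P) x y) =
      reesMul P (reesEntriesEmbedding P x) (reesEntriesEmbedding P y) := by
  simp [reesEntriesEmbedding, reesMul, reesEntriesMatrix]

theorem reesEntriesEmbedding_inv (x : I × Subgroup.closure (reesEntries P) × Λ) :
    reesEntriesEmbedding P (reesInv (reesEntriesMatrix P) x) =
      reesInv P (reesEntriesEmbedding P x) := by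
  simp [reesEntriesEmbedding, reesInv, reesEntriesMatrix]

theorem range_reesEntriesEmbedding :
    Set.range (reesEntriesEmbedding P) = {x | x.2.1 ∈ Subgroup.closure (reesEntries P)} :=
  Set.ext fun x => ⟨fun ⟨y, hy⟩ => hy ▸ y.2.1.2, fun hx => ⟨(x.1, ⟨x.2.1, hx⟩, x.2.2), rfl⟩⟩

variable (P) in
def reesIdempotents : Set (I × G × Λ) := {x | reesMul P x x = x}

theorem mem_reesIdempotents_iff {x : I × G × Λ} :
    x ∈ reesIdempotents P ↔ x.2.1 = (P x.2.2 x.1)⁻¹ := by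
  simp [reesIdempotents, reesMul, Prod.ext_iff, eq_inv_iff_mul_eq_one]

/-- With `id` as unary operation `CSClosure` is the subsemigroup generated, so the left-hand
side is `⟨E(S)⟩`. -/
theorem setOf_cSClosure_reesIdempotents (hrow : ∀ j : I, P lL j = 1)
    (hcol : ∀ m : Λ, P m iI = 1) :
    {x | CSClosure (reesMul P) id (reesIdempotents P) x} =
      {x | x.2.1 ∈ Subgroup.closure (reesEntries P)} := by
  ext x
  refine ⟨fun hx => ?_, fun hx => ?_⟩
  · induction hx with
    | base hy =>
      show _ ∈ Subgroup.closure _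
      rw [mem_reesIdempotents_iff.mp hy]
      exact inv_mem (Subgroup.subset_closure ⟨_, _, rfl⟩)
    | mul _ _ ihx ihy =>
      exact mul_mem (mul_mem ihx (Subgroup.subset_closure ⟨_, _, rfl⟩ :
        P _ _ ∈ Subgroup.closure (reesEntries P))) ihy
    | inv _ ih => exact ih
  have hrowE : ∀ i : I, reesCorner i lL 1 ∈ reesIdempotents P := fun i =>
    mem_reesIdempotents_iff.mpr (by simp [reesCorner, hrow])
  have hcolE : ∀ l : Λ, reesCorner iI l 1 ∈ reesIdempotents P := fun l =>
    mem_reesIdempotents_iff.mpr (by simp [reesCorner, hcol])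
  have hsandwich : ∀ i l y, CSClosure (reesMul P) id (reesIdempotents P) y →
      CSClosure (reesMul P) id (reesIdempotents P) (reesCorner i l y.2.1) := fun i l y hy =>
    reesMul_sandwich hrow hcol i l y ▸ .mul (.mul (.base (hrowE i)) hy) (.base (hcolE l))
  have hcorner : ∀ g ∈ Subgroup.closure (reesEntries P),
      CSClosure (reesMul P) id (reesIdempotents P) (reesCorner iI lL g) := fun g hg => by
    rw [← Subgroup.mem_toSubmonoid, Subgroup.closure_toSubmonoid] at hg
    induction hg using Submonoid.closure_induction with
    | mem g hg =>
      obtain ⟨l, i, rfl⟩ | ⟨l, i, hg⟩ := hg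
      · have h : reesCorner iI lL (P l i) = reesMul P (reesCorner iI l 1) (reesCorner i lL 1) := by
          simp [reesCorner, reesMul]
        exact h ▸ .mul (.base (hcolE l)) (.base (hrowE i))
      · have hE : (i, g, l) ∈ reesIdempotents P := mem_reesIdempotents_iff.mpr (by simp [hg])
        exact hsandwich iI lL _ (.base hE)
    | one => exact .base (hrowE iI)
    | mul g h _ _ ihg ihh => exact reesCorner_mul (hcol lL) g h ▸ .mul ihg ihh
  exact hsandwich x.1 x.2.2 (reesCorner iI lL x.2.1) (hcorner x.2.1 hx)

theorem isCSHomogeneous_reesEntriesMatrix (hrow : ∀ j : I, P lL j = 1)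
    (hcol : ∀ m : Λ, P m iI = 1) (hhom : IsCSHomogeneous (reesMul P) (reesInv P)) :
    IsCSHomogeneous (reesMul (reesEntriesMatrix P)) (reesInv (reesEntriesMatrix P)) := by
  refine hhom.of_embedding _ reesEntriesEmbedding_injective reesEntriesEmbedding_mul
    reesEntriesEmbedding_inv fun Φ hΦop => ?_
  have hidem : Set.MapsTo Φ (reesIdempotents P) (reesIdempotents P) := fun y hy =>
    (hΦop y y).symm.trans (congrArg Φ hy)
  rw [range_reesEntriesEmbedding, ← setOf_cSClosure_reesIdempotents hrow hcol]
  exact fun x hx => CSClosure.map (star := id) (star' := id) Φ hΦop (fun _ => rfl) hidem hx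

end Rees

theorem rees_homogeneous_imp_general {G I Λ : Type*} [Group G]
    (P : Λ → I → G) (iI : I) (lL : Λ)
    (hrow : ∀ j : I, P lL j = 1) (hcol : ∀ m : Λ, P m iI = 1)
    (hhom : IsCSHomogeneous (reesMul P) (reesInv P)) :
    IsHomogeneousGroup G ∧
      IsCSHomogeneous (reesMul (reesEntriesMatrix P)) (reesInv (reesEntriesMatrix P)) :=
  ⟨isHomogeneousGroup_of_isCSHomogeneous hrow hcol hhom,
    isCSHomogeneous_reesEntriesMatrix hrow hcol hhom⟩

/-- If a normalised Rees matrix semigroup `S = M[G;I,Λ;P]` over a countable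
group `G` with countable nonempty index sets is homogeneous as a completely simple
semigroup, then `G` is a homogeneous group and `⟨E(S)⟩` is homogeneous as a completely
simple semigroup. -/
theorem rees_homogeneous_imp {G I Λ : Type*} [Group G] [Countable G]
    [Countable I] [Countable Λ] [Nonempty I] [Nonempty Λ]
    (P : Λ → I → G) (iI : I) (lL : Λ)
    (hrow : ∀ j : I, P lL j = 1) (hcol : ∀ m : Λ, P m iI = 1)
    (hhom : IsCSHomogeneous (reesMul P) (reesInv P)) :
    IsHomogeneousGroup G ∧
      IsCSHomogeneous (reesMul (reesEntriesMatrix P)) (reesInv (reesEntriesMatrix P)) :=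
  rees_homogeneous_imp_general P iI lL hrow hcol hhom
end

section
/- Let G be a countable group, I and Λ nonempty countable sets, P : Λ × I → G a matrix, and let S = M[G;I,Λ;P] be a normalised Rees matrix semigroup such that the set G^P is a subgroup of G which is either trivial or cyclic of prime order (i.e. a simple abelian group). Then S is homogeneous as a completely simple semigroup if and only if G is a homogeneous group, the subsemigroup ⟨E(S)⟩ generated by the idempotents of S is homogeneous as a completely simple semigroup, and G^P is a characteristic subgroup of G. -/
/-!
Fix a base point `(i0, l0)` and pass to the coordinates `reesCoord P i0 l0`, in which the
sandwich matrix becomes `reesNormalize P i0 l0`. An isomorphism `φ` between completely simple subsemigroups, with `t0` in its domain `T`, acts on rows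
and columns by injections `α`, `β`, and in these coordinates (based at `t0` and at `φ t0`) by an
isomorphism between the subgroups of `G` generated by the coordinates of `T`; these are finitely
generated when `T` is. The map `reesLift θ α β` is then a homomorphism exactly when `θ` carries
`reesNormalize P i0 l0` to `reesNormalize P (α i0) (β l0)` along `α` and `β`.

If `S` is homogeneous, so is its maximal subgroup `G`; automorphisms of the normalised `S`
preserve `⟨E(S)⟩ = I × G^P × Λ`, whence `⟨E(S)⟩` is homogeneous, and extending `(i, g, l) ↦
(i, θ g, l)` from the finite group `G^P` shows that `G^P` is characteristic. Conversely, extend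
`θ` to an automorphism of `G`; it restricts to the characteristic subgroup `G^P`, and as `G^P` is
finite, `reesLift θ α β` is an isomorphism between finitely generated subsemigroups of `⟨E(S)⟩`.
Any automorphism of `⟨E(S)⟩` extending it is `reesLift θ α' β'` with bijections `α'`, `β'`
extending `α`, `β`, and the compatibility of `θ` with `α'`, `β'` makes `reesLift θ α' β'` an
automorphism of `S` extending `φ`.
-/

section Closure

variable {S S' : Type*} {op : S → S → S} {star : S → S} {op' : S' → S' → S'} {star' : S' → S'}

theorem CSClosure.mem_of_closed {X T : Set S} (hXT : X ⊆ T)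
    (hmul : ∀ a ∈ T, ∀ b ∈ T, op a b ∈ T) (hstar : ∀ a ∈ T, star a ∈ T) {x : S}
    (hx : CSClosure op star X x) : x ∈ T := by
  induction hx with
  | base h => exact hXT h
  | mul _ _ ha hb => exact hmul _ ha _ hb
  | inv _ ha => exact hstar _ ha

theorem setOf_CSClosure_of_closed {T : Set S} (hmul : ∀ a ∈ T, ∀ b ∈ T, op a b ∈ T)
    (hstar : ∀ a ∈ T, star a ∈ T) : {x | CSClosure op star T x} = T :=
  Set.Subset.antisymm (fun _ => CSClosure.mem_of_closed subset_rfl hmul hstar)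
    fun _ => CSClosure.base

theorem setOf_CSClosure_image {f : S' → S} (hmul : ∀ a b, f (op' a b) = op (f a) (f b))
    (hstar : ∀ a, f (star' a) = star (f a)) (X : Set S') :
    {x | CSClosure op star (f '' X) x} = f '' {x | CSClosure op' star' X x} := by
  ext x
  constructor
  · intro h
    induction h with
    | base hx => obtain ⟨a, ha, rfl⟩ := hx; exact ⟨a, .base ha, rfl⟩
    | mul _ _ ihx ihy =>
      obtain ⟨a, ha, rfl⟩ := ihx
      obtain ⟨b, hb, rfl⟩ := ihy
      exact ⟨_, .mul ha hb, hmul a b⟩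
    | inv _ ih => obtain ⟨a, ha, rfl⟩ := ih; exact ⟨_, .inv ha, hstar a⟩
  · rintro ⟨a, ha, rfl⟩
    induction ha with
    | base h => exact .base ⟨_, h, rfl⟩
    | mul _ _ ihx ihy => rw [hmul]; exact .mul ihx ihy
    | inv _ ih => rw [hstar]; exact .inv ih

theorem setOf_CSClosure_mul_inv {G : Type*} [Group G] {s : Set G} (hs : s.Nonempty) :
    {g | CSClosure (· * ·) (·⁻¹) s g} = Subgroup.closure s := by
  ext g
  refine ⟨CSClosure.mem_of_closed Subgroup.subset_closure (fun _ ha _ hb => mul_mem ha hb)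
    (fun _ ha => inv_mem ha), fun hg => ?_⟩
  obtain ⟨a, ha⟩ := hs
  induction hg using Subgroup.closure_induction with
  | mem _ h => exact .base h
  | one => simpa using CSClosure.mul (.base ha) (.inv (op := (· * ·)) (star := (·⁻¹)) (.base ha))
  | mul _ _ _ _ hx hy => exact .mul hx hy
  | inv _ _ hx => exact .inv hx

theorem Equiv.ofBijective_symm_op {Φ : S → S} (hΦ : Function.Bijective Φ)
    (hmul : ∀ x y, Φ (op x y) = op (Φ x) (Φ y)) (x y : S) :
    (Equiv.ofBijective Φ hΦ).symm (op x y) =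
      op ((Equiv.ofBijective Φ hΦ).symm x) ((Equiv.ofBijective Φ hΦ).symm y) := by
  set E := Equiv.ofBijective Φ hΦ
  obtain ⟨x, rfl⟩ := E.surjective x
  obtain ⟨y, rfl⟩ := E.surjective y
  rw [E.symm_apply_apply, E.symm_apply_apply, E.symm_apply_eq]
  exact (hmul x y).symm

end Closure

section Transfer

variable {S S' : Type*} {op : S → S → S} {star : S → S} {op' : S' → S' → S'} {star' : S' → S'}

theorem IsCSHomogeneous.of_injective (hS : IsCSHomogeneous op star) {ι : S' → S}
    (hι : Function.Injective ι) (hmul : ∀ a b, ι (op' a b) = op (ι a) (ι b))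
    (hstar : ∀ a, ι (star' a) = star (ι a))
    (hrange : ∀ Φ : S → S, Function.Bijective Φ → (∀ x y, Φ (op x y) = op (Φ x) (Φ y)) →
      ∀ a, ∃ b, Φ (ι a) = ι b) :
    IsCSHomogeneous op' star' := by
  classical
  intro X Y φ hφ hφmul
  have hclosure (Z : Finset S') : {x | CSClosure op star ((Z.image ι : Finset S) : Set S) x} =
      ι '' {x | CSClosure op' star' (Z : Set S') x} := by
    rw [Finset.coe_image, setOf_CSClosure_image hmul hstar]
  set ψ := Function.extend ι (ι ∘ φ) id
  have hψ (a : S') : ψ (ι a) = ι (φ a) := hι.extend_apply _ _ a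
  have hψbij : Set.BijOn ψ {x | CSClosure op star ((X.image ι : Finset S) : Set S) x}
      {x | CSClosure op star ((Y.image ι : Finset S) : Set S) x} := by
    rw [hclosure, hclosure]
    refine ⟨?_, ?_, ?_⟩
    · rintro _ ⟨a, ha, rfl⟩
      exact ⟨φ a, hφ.mapsTo ha, (hψ a).symm⟩
    · rintro _ ⟨a, ha, rfl⟩ _ ⟨b, hb, rfl⟩ hab
      rw [hψ, hψ] at hab
      rw [hφ.injOn ha hb (hι hab)]
    · rintro _ ⟨b, hb, rfl⟩
      obtain ⟨a, ha, rfl⟩ := hφ.surjOn hb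
      exact ⟨ι a, ⟨a, ha, rfl⟩, hψ a⟩
  obtain ⟨Φ, hΦ, hΦmul, hΦψ⟩ := hS _ _ ψ hψbij (by
    intro x y hx hy
    obtain ⟨a, ha, rfl⟩ := (hclosure X).subset hx
    obtain ⟨b, hb, rfl⟩ := (hclosure X).subset hy
    rw [← hmul, hψ, hψ, hψ, hφmul a b ha hb, hmul])
  choose Φ' hΦ' using hrange Φ hΦ hΦmul
  refine ⟨Φ', ⟨fun a b hab => hι (hΦ.injective ?_), fun b => ?_⟩, fun a b => hι ?_,
    fun a ha => hι ?_⟩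
  · rw [hΦ', hΦ', hab]
  · set E := Equiv.ofBijective Φ hΦ
    obtain ⟨a, ha⟩ := hrange E.symm E.symm.bijective (Equiv.ofBijective_symm_op hΦ hΦmul) b
    refine ⟨a, hι ?_⟩
    rw [← hΦ', ← ha]
    exact E.apply_symm_apply (ι b)
  · rw [← hΦ', hmul, hmul, hΦmul, hΦ', hΦ']
  · rw [← hΦ', hΦψ _ ((hclosure X).symm.subset ⟨a, ha, rfl⟩), hψ]

end Transfer

section ReesCoordinates

variable {G H I Λ I' Λ' : Type*} [Group G] [Group H] (P : Λ → I → G)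

/- With `reesNormalize P i0 l0` as sandwich matrix, which is normalised at `(i0, l0)`,
`x ↦ (x.1, reesCoord P i0 l0 x, x.2.2)` is an isomorphism from `M[G;I,Λ;P]`, and
`reesBase P i0 l0` is its inverse on the maximal subgroup `H_{i0 l0}`. -/
def reesNormalize (i0 : I) (l0 : Λ) (l : Λ) (j : I) : G :=
  P l0 i0 * (P l i0)⁻¹ * P l j * (P l0 j)⁻¹

def reesCoord (i0 : I) (l0 : Λ) (x : I × G × Λ) : G :=
  P l0 x.1 * x.2.1 * P x.2.2 i0 * (P l0 i0)⁻¹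

def reesBase (i0 : I) (l0 : Λ) (g : G) : I × G × Λ :=
  (i0, (P l0 i0)⁻¹ * g, l0)

variable {P}

theorem reesMul_assoc (x y z : I × G × Λ) :
    reesMul P (reesMul P x y) z = reesMul P x (reesMul P y z) := by
  simp [reesMul, mul_assoc]

theorem reesNormalize_self (i0 : I) (l0 : Λ) : reesNormalize P i0 l0 l0 i0 = 1 := by
  simp [reesNormalize]

theorem reesCoord_reesMul (i0 : I) (l0 : Λ) (x y : I × G × Λ) :
    reesCoord P i0 l0 (reesMul P x y) =
      reesCoord P i0 l0 x * reesNormalize P i0 l0 x.2.2 y.1 * reesCoord P i0 l0 y := by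
  simp only [reesCoord, reesNormalize, reesMul]
  group

theorem reesCoord_reesInv (i0 : I) (l0 : Λ) (x : I × G × Λ) :
    reesCoord P i0 l0 (reesInv P x) = (reesNormalize P i0 l0 x.2.2 x.1)⁻¹ *
      (reesCoord P i0 l0 x)⁻¹ * (reesNormalize P i0 l0 x.2.2 x.1)⁻¹ := by
  simp only [reesCoord, reesNormalize, reesInv]
  group

theorem map_reesNormalize (f : G →* H) (i0 : I) (l0 : Λ) (l : Λ) (j : I) :
    f (reesNormalize P i0 l0 l j) = reesNormalize (fun l i => f (P l i)) i0 l0 l j := by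
  simp [reesNormalize]

theorem reesNormalize_eq (i0 : I) (l0 : Λ) (x y : I × G × Λ) :
    reesNormalize P i0 l0 x.2.2 y.1 =
      (reesCoord P i0 l0 x)⁻¹ * reesCoord P i0 l0 (reesMul P x y) * (reesCoord P i0 l0 y)⁻¹ := by
  rw [reesCoord_reesMul]
  group

theorem reesCoord_reesBase (i0 : I) (l0 : Λ) (g : G) :
    reesCoord P i0 l0 (reesBase P i0 l0 g) = g := by
  simp [reesCoord, reesBase]

theorem reesBase_injective (i0 : I) (l0 : Λ) : Function.Injective (reesBase P i0 l0) :=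
  Function.LeftInverse.injective (reesCoord_reesBase i0 l0)

theorem reesMul_reesBase (i0 : I) (l0 : Λ) (a b : G) :
    reesMul P (reesBase P i0 l0 a) (reesBase P i0 l0 b) = reesBase P i0 l0 (a * b) := by
  simp [reesMul, reesBase, mul_assoc]

theorem reesInv_reesBase (i0 : I) (l0 : Λ) (a : G) :
    reesInv P (reesBase P i0 l0 a) = reesBase P i0 l0 a⁻¹ := by
  simp only [reesInv, reesBase, Prod.mk.injEq, true_and, and_true]
  group

theorem reesMul_self_reesInv (x : I × G × Λ) :
    reesMul P x (reesInv P x) = reesBase P x.1 x.2.2 1 := by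
  simp only [reesMul, reesInv, reesBase, Prod.mk.injEq, true_and, and_true]
  group

theorem reesMul_reesInv_self (x : I × G × Λ) :
    reesMul P (reesInv P x) x = reesBase P x.1 x.2.2 1 := by
  simp only [reesMul, reesInv, reesBase, Prod.mk.injEq, true_and, and_true]
  group

theorem reesBase_reesCoord (i0 : I) (l0 : Λ) (x : I × G × Λ) :
    reesBase P i0 l0 (reesCoord P i0 l0 x) =
      reesMul P (reesMul P (reesBase P i0 l0 1) x) (reesBase P i0 l0 1) := by
  simp only [reesMul, reesBase, reesCoord, Prod.mk.injEq, true_and, and_true]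
  group

theorem eq_of_reesCoord_eq {i0 : I} {l0 : Λ} {x y : I × G × Λ} (h1 : x.1 = y.1)
    (h3 : x.2.2 = y.2.2) (h : reesCoord P i0 l0 x = reesCoord P i0 l0 y) : x = y := by
  obtain ⟨i, g, l⟩ := x
  obtain ⟨j, g', m⟩ := y
  simp only [reesCoord] at h1 h3 h
  subst h1 h3
  simpa using h

theorem eq_reesBase_one_of_idempotent {f : I × G × Λ} (hf : reesMul P f f = f) :
    f = reesBase P f.1 f.2.2 1 := by
  obtain ⟨i, g, l⟩ := f
  simp only [reesMul, reesBase, Prod.mk.injEq, true_and, and_true, mul_one] at hf ⊢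
  refine eq_inv_of_mul_eq_one_right ?_
  calc P l i * g = g⁻¹ * (g * P l i * g) := by group
    _ = 1 := by rw [hf, inv_mul_cancel]

theorem reesMul_of_idempotent_left {f : I × G × Λ} (hf : reesMul P f f = f) {y : I × G × Λ}
    (h : f.1 = y.1) : reesMul P f y = y := by
  rw [eq_reesBase_one_of_idempotent hf]
  simp [reesMul, reesBase, h]

theorem reesMul_of_idempotent_right {f : I × G × Λ} (hf : reesMul P f f = f) {y : I × G × Λ}
    (h : y.2.2 = f.2.2) : reesMul P y f = y := by
  obtain ⟨j, g, m⟩ := y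
  subst h
  rw [eq_reesBase_one_of_idempotent hf]
  simp [reesMul, reesBase]

end ReesCoordinates

section ReesMaps

variable {G H I Λ I' Λ' : Type*} [Group G] [Group H] {P : Λ → I → G} {Q : Λ' → I' → H}

theorem reesMap_bijOn (θ : G ≃* H) {ψI : I → I'} {ψΛ : Λ → Λ'} (u : I → H) (v : Λ → H)
    {s : Set I} {t : Set Λ} (hs : s.InjOn ψI) (ht : t.InjOn ψΛ) :
    Set.BijOn (reesMap (θ : G →* H) ψI ψΛ u v) (s ×ˢ Set.univ ×ˢ t)
      ((ψI '' s) ×ˢ Set.univ ×ˢ (ψΛ '' t)) := by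
  refine ⟨fun x hx => ⟨⟨x.1, hx.1, rfl⟩, trivial, ⟨x.2.2, hx.2.2, rfl⟩⟩, ?_, ?_⟩
  · rintro ⟨i, g, l⟩ ⟨hi, -, hl⟩ ⟨j, g', m⟩ ⟨hj, -, hm⟩ h
    simp only [reesMap, Prod.mk.injEq] at h
    obtain rfl := hs hi hj h.1
    obtain rfl := ht hl hm h.2.2
    simpa using h.2.1
  · rintro ⟨_, g, _⟩ ⟨⟨i, hi, rfl⟩, -, ⟨l, hl, rfl⟩⟩
    refine ⟨(i, θ.symm ((u i)⁻¹ * g * (v l)⁻¹), l), ⟨hi, trivial, hl⟩, ?_⟩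
    simp [reesMap, mul_assoc]

variable (P Q)

/- The map `[θ, α, β, u, v]` with `u`, `v` chosen so that it acts as `θ` in the coordinates
`reesCoord` at `(i0, l0)` and `(α i0, β l0)` (`reesCoord_reesLift`). -/
def reesLift (θ : G →* H) (α : I → I') (β : Λ → Λ') (i0 : I) (l0 : Λ) :
    I × G × Λ → I' × H × Λ' :=
  reesMap θ α β (fun i => (Q (β l0) (α i))⁻¹ * θ (P l0 i))
    (fun l => θ (P l i0) * (θ (P l0 i0))⁻¹ * Q (β l0) (α i0) * (Q (β l) (α i0))⁻¹)

variable {P Q}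

theorem reesCoord_reesLift (θ : G →* H) (α : I → I') (β : Λ → Λ') (i0 : I) (l0 : Λ)
    (x : I × G × Λ) :
    reesCoord Q (α i0) (β l0) (reesLift P Q θ α β i0 l0 x) = θ (reesCoord P i0 l0 x) := by
  simp only [reesCoord, reesLift, reesMap, map_mul, map_inv]
  group

theorem eq_reesLift_of_reesCoord {θ : G →* H} {α : I → I'} {β : Λ → Λ'} {i0 : I} {l0 : Λ}
    {x : I × G × Λ} {y : I' × H × Λ'} (h1 : y.1 = α x.1) (h3 : y.2.2 = β x.2.2)
    (h : reesCoord Q (α i0) (β l0) y = θ (reesCoord P i0 l0 x)) :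
    y = reesLift P Q θ α β i0 l0 x :=
  eq_of_reesCoord_eq h1 h3 (h.trans (reesCoord_reesLift θ α β i0 l0 x).symm)

theorem reesLift_congr {θ : G →* H} {α α' : I → I'} {β β' : Λ → Λ'} {i0 : I} {l0 : Λ}
    {x : I × G × Λ} (hi : α x.1 = α' x.1) (hi0 : α i0 = α' i0) (hl : β x.2.2 = β' x.2.2)
    (hl0 : β l0 = β' l0) : reesLift P Q θ α β i0 l0 x = reesLift P Q θ α' β' i0 l0 x := by
  simp only [reesLift, reesMap, hi, hi0, hl, hl0]

theorem eqOn_of_reesLift_eqOn {θ θ' : G →* H} {α α' : I → I'} {β β' : Λ → Λ'} {i0 : I}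
    {l0 : Λ} {s : Set I} {t : Set Λ} (hi0 : i0 ∈ s) (hl0 : l0 ∈ t)
    (h : ∀ x ∈ s ×ˢ Set.univ ×ˢ t,
      reesLift P Q θ' α' β' i0 l0 x = reesLift P Q θ α β i0 l0 x) :
    Set.EqOn α' α s ∧ Set.EqOn β' β t ∧ ∀ g, θ' g = θ g := by
  have hα : Set.EqOn α' α s := fun i hi => congrArg Prod.fst (h (i, 1, l0) ⟨hi, trivial, hl0⟩)
  have hβ : Set.EqOn β' β t := fun l hl =>
    congrArg (fun x => x.2.2) (h (i0, 1, l) ⟨hi0, trivial, hl⟩)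
  refine ⟨hα, hβ, fun g => ?_⟩
  have hg := congrArg (reesCoord Q (α i0) (β l0)) (h (reesBase P i0 l0 g) ⟨hi0, trivial, hl0⟩)
  rwa [← hα hi0, ← hβ hl0, reesCoord_reesLift, hα hi0, hβ hl0, reesCoord_reesLift,
    reesCoord_reesBase] at hg

theorem reesLift_reesMul_iff (θ : G →* H) (α : I → I') (β : Λ → Λ') (i0 : I) (l0 : Λ)
    (x y : I × G × Λ) :
    reesLift P Q θ α β i0 l0 (reesMul P x y) =
        reesMul Q (reesLift P Q θ α β i0 l0 x) (reesLift P Q θ α β i0 l0 y) ↔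
      θ (reesNormalize P i0 l0 x.2.2 y.1) = reesNormalize Q (α i0) (β l0) (β x.2.2) (α y.1) := by
  set A := (Q (β l0) (α x.1))⁻¹ * θ (P l0 x.1) * θ x.2.1 * θ (P x.2.2 i0) * (θ (P l0 i0))⁻¹
  set B := θ (P l0 y.1) * θ y.2.1 * θ (P y.2.2 i0) * (θ (P l0 i0))⁻¹ * Q (β l0) (α i0) *
    (Q (β y.2.2) (α i0))⁻¹
  have hL : (reesLift P Q θ α β i0 l0 (reesMul P x y)).2.1 =
      A * θ (reesNormalize P i0 l0 x.2.2 y.1) * B := by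
    simp only [A, B, reesLift, reesMap, reesMul, reesNormalize, map_mul, map_inv]
    group
  have hR : (reesMul Q (reesLift P Q θ α β i0 l0 x) (reesLift P Q θ α β i0 l0 y)).2.1 =
      A * reesNormalize Q (α i0) (β l0) (β x.2.2) (α y.1) * B := by
    simp only [A, B, reesLift, reesMap, reesMul, reesNormalize]
    group
  rw [← mul_left_cancel_iff (a := A), ← mul_right_cancel_iff (a := B), ← hL, ← hR]
  exact ⟨fun h => congrArg (fun z => z.2.1) h, fun h => Prod.ext rfl (Prod.ext h rfl)⟩

theorem reesLift_bijective (θ : G ≃* H) (α : I ≃ I') (β : Λ ≃ Λ') (i0 : I) (l0 : Λ) :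
    Function.Bijective (reesLift P Q (θ : G →* H) α β i0 l0) := by
  have h := reesMap_bijOn θ (fun i => (Q (β l0) (α i))⁻¹ * θ (P l0 i))
    (fun l => θ (P l i0) * (θ (P l0 i0))⁻¹ * Q (β l0) (α i0) * (Q (β l) (α i0))⁻¹)
    (s := Set.univ) (t := Set.univ) α.injective.injOn β.injective.injOn
  simp only [Set.image_univ_of_surjective α.surjective, Set.image_univ_of_surjective β.surjective,
    Set.univ_prod_univ, Set.bijOn_univ] at h
  exact h

end ReesMaps

section PartialHom

variable {G I Λ : Type*} [Group G] {P : Λ → I → G} {X : Set (I × G × Λ)}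

variable (P) in
def reesClosure (X : Set (I × G × Λ)) : Set (I × G × Λ) :=
  {x | CSClosure (reesMul P) (reesInv P) X x}

theorem subset_reesClosure : X ⊆ reesClosure P X := fun _ => CSClosure.base

theorem reesMul_mem_reesClosure {a b : I × G × Λ} (ha : a ∈ reesClosure P X)
    (hb : b ∈ reesClosure P X) : reesMul P a b ∈ reesClosure P X :=
  CSClosure.mul ha hb

theorem reesInv_mem_reesClosure {a : I × G × Λ} (ha : a ∈ reesClosure P X) :
    reesInv P a ∈ reesClosure P X :=
  CSClosure.inv ha

theorem reesBase_one_mem_reesClosure {t : I × G × Λ} (ht : t ∈ reesClosure P X) :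
    reesBase P t.1 t.2.2 1 ∈ reesClosure P X := by
  rw [← reesMul_self_reesInv]
  exact reesMul_mem_reesClosure ht (reesInv_mem_reesClosure ht)

theorem reesBase_one_idempotent (i : I) (l : Λ) :
    reesMul P (reesBase P i l 1) (reesBase P i l 1) = reesBase P i l 1 := by
  rw [reesMul_reesBase, mul_one]

theorem exists_fst_snd_snd_of_mem_reesClosure {x : I × G × Λ} (hx : x ∈ reesClosure P X) :
    (∃ a ∈ X, a.1 = x.1) ∧ ∃ b ∈ X, b.2.2 = x.2.2 :=
  CSClosure.mem_of_closed (op := reesMul P) (star := reesInv P)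
    (T := {x | (∃ a ∈ X, a.1 = x.1) ∧ ∃ b ∈ X, b.2.2 = x.2.2})
    (fun x hx => ⟨⟨x, hx, rfl⟩, ⟨x, hx, rfl⟩⟩) (fun _ ha _ hb => ⟨ha.1, hb.2⟩) (fun _ ha => ha) hx

variable (P) in
def ReesHomOn (T : Set (I × G × Λ)) (φ : I × G × Λ → I × G × Λ) : Prop :=
  ∀ a ∈ T, ∀ b ∈ T, φ (reesMul P a b) = reesMul P (φ a) (φ b)

variable {φ : I × G × Λ → I × G × Λ}

theorem map_fst_congr (hφ : ReesHomOn P (reesClosure P X) φ) {t t' : I × G × Λ}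
    (ht : t ∈ reesClosure P X) (ht' : t' ∈ reesClosure P X) (h : t.1 = t'.1) :
    (φ t).1 = (φ t').1 := by
  have hdecomp : reesMul P t (reesMul P (reesInv P t) t') = t' := by
    rw [← reesMul_assoc, reesMul_self_reesInv]
    exact reesMul_of_idempotent_left (reesBase_one_idempotent _ _) h
  rw [← hdecomp, hφ _ ht _ (reesMul_mem_reesClosure (reesInv_mem_reesClosure ht) ht')]
  rfl

theorem map_snd_snd_congr (hφ : ReesHomOn P (reesClosure P X) φ) {t t' : I × G × Λ}
    (ht : t ∈ reesClosure P X) (ht' : t' ∈ reesClosure P X) (h : t.2.2 = t'.2.2) :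
    (φ t).2.2 = (φ t').2.2 := by
  have hdecomp : reesMul P (reesMul P t' (reesInv P t)) t = t' := by
    rw [reesMul_assoc, reesMul_reesInv_self]
    exact reesMul_of_idempotent_right (reesBase_one_idempotent _ _) h.symm
  rw [← hdecomp, hφ _ (reesMul_mem_reesClosure ht' (reesInv_mem_reesClosure ht)) _ ht]
  rfl

theorem map_reesBase_one (hφ : ReesHomOn P (reesClosure P X) φ) {t0 : I × G × Λ}
    (ht0 : t0 ∈ reesClosure P X) :
    φ (reesBase P t0.1 t0.2.2 1) = reesBase P (φ t0).1 (φ t0).2.2 1 := by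
  have he := reesBase_one_mem_reesClosure ht0
  have hφe := eq_reesBase_one_of_idempotent (P := P) (f := φ (reesBase P t0.1 t0.2.2 1))
    (by rw [← hφ _ he _ he, reesBase_one_idempotent])
  rwa [map_fst_congr hφ he ht0 rfl, map_snd_snd_congr hφ he ht0 rfl] at hφe

theorem fst_eq_of_map_fst_eq (hφ : ReesHomOn P (reesClosure P X) φ)
    (hinj : Set.InjOn φ (reesClosure P X)) {t t' : I × G × Λ} (ht : t ∈ reesClosure P X)
    (ht' : t' ∈ reesClosure P X) (h : (φ t).1 = (φ t').1) : t.1 = t'.1 := by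
  have he := reesBase_one_mem_reesClosure ht
  have hleft : reesMul P (reesBase P t.1 t.2.2 1) t' = t' := by
    refine hinj (reesMul_mem_reesClosure he ht') ht' ?_
    rw [hφ _ he _ ht', map_reesBase_one hφ ht]
    exact reesMul_of_idempotent_left (reesBase_one_idempotent _ _) h
  rw [← hleft]
  rfl

theorem snd_snd_eq_of_map_snd_snd_eq (hφ : ReesHomOn P (reesClosure P X) φ)
    (hinj : Set.InjOn φ (reesClosure P X)) {t t' : I × G × Λ} (ht : t ∈ reesClosure P X)
    (ht' : t' ∈ reesClosure P X) (h : (φ t).2.2 = (φ t').2.2) : t.2.2 = t'.2.2 := by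
  have he := reesBase_one_mem_reesClosure ht
  have hright : reesMul P t' (reesBase P t.1 t.2.2 1) = t' := by
    refine hinj (reesMul_mem_reesClosure ht' he) ht' ?_
    rw [hφ _ ht' _ he, map_reesBase_one hφ ht]
    exact reesMul_of_idempotent_right (reesBase_one_idempotent _ _) h.symm
  rw [← hright]
  rfl

theorem reesCoord_map_reesBase_mul (hφ : ReesHomOn P (reesClosure P X) φ) {t0 : I × G × Λ}
    (ht0 : t0 ∈ reesClosure P X) {a b : G}
    (ha : reesBase P t0.1 t0.2.2 a ∈ reesClosure P X)
    (hb : reesBase P t0.1 t0.2.2 b ∈ reesClosure P X) :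
    reesCoord P (φ t0).1 (φ t0).2.2 (φ (reesBase P t0.1 t0.2.2 (a * b))) =
      reesCoord P (φ t0).1 (φ t0).2.2 (φ (reesBase P t0.1 t0.2.2 a)) *
        reesCoord P (φ t0).1 (φ t0).2.2 (φ (reesBase P t0.1 t0.2.2 b)) := by
  rw [← reesMul_reesBase, hφ _ ha _ hb, reesCoord_reesMul, map_snd_snd_congr hφ ha ht0 rfl,
    map_fst_congr hφ hb ht0 rfl, reesNormalize_self, mul_one]

theorem reesCoord_map_reesBase_reesCoord (hφ : ReesHomOn P (reesClosure P X) φ)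
    {t0 t : I × G × Λ} (ht0 : t0 ∈ reesClosure P X) (ht : t ∈ reesClosure P X) :
    reesCoord P (φ t0).1 (φ t0).2.2 (φ (reesBase P t0.1 t0.2.2 (reesCoord P t0.1 t0.2.2 t))) =
      reesCoord P (φ t0).1 (φ t0).2.2 (φ t) := by
  have he := reesBase_one_mem_reesClosure ht0
  rw [reesBase_reesCoord, hφ _ (reesMul_mem_reesClosure he ht) _ he, hφ _ he _ ht,
    map_reesBase_one hφ ht0, ← reesBase_reesCoord, reesCoord_reesBase]

theorem eq_of_reesCoord_map_reesBase_eq (hφ : ReesHomOn P (reesClosure P X) φ)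
    (hinj : Set.InjOn φ (reesClosure P X)) {t0 : I × G × Λ}
    {a b : G} (ha : reesBase P t0.1 t0.2.2 a ∈ reesClosure P X)
    (hb : reesBase P t0.1 t0.2.2 b ∈ reesClosure P X)
    (h : reesCoord P (φ t0).1 (φ t0).2.2 (φ (reesBase P t0.1 t0.2.2 a)) =
      reesCoord P (φ t0).1 (φ t0).2.2 (φ (reesBase P t0.1 t0.2.2 b))) : a = b :=
  reesBase_injective _ _ (hinj ha hb (eq_of_reesCoord_eq (map_fst_congr hφ ha hb rfl)
    (map_snd_snd_congr hφ ha hb rfl) h))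

theorem exists_fst_map_eq (hφ : ReesHomOn P (reesClosure P X) φ) :
    ∃ α : I → I, ∀ t ∈ reesClosure P X, (φ t).1 = α t.1 :=
  ⟨Function.extend (fun t : reesClosure P X => t.1.1) (fun t => (φ t).1) id, fun t ht =>
    (Function.FactorsThrough.extend_apply (fun (a b : reesClosure P X) hab =>
      map_fst_congr hφ a.2 b.2 hab) id ⟨t, ht⟩).symm⟩

theorem exists_snd_snd_map_eq (hφ : ReesHomOn P (reesClosure P X) φ) :
    ∃ β : Λ → Λ, ∀ t ∈ reesClosure P X, (φ t).2.2 = β t.2.2 :=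
  ⟨Function.extend (fun t : reesClosure P X => t.1.2.2) (fun t => (φ t).2.2) id, fun t ht =>
    (Function.FactorsThrough.extend_apply (fun (a b : reesClosure P X) hab =>
      map_snd_snd_congr hφ a.2 b.2 hab) id ⟨t, ht⟩).symm⟩

end PartialHom

section MaximalSubgroup

variable {G I Λ : Type*} [Group G] {P : Λ → I → G}

theorem reesNormalize_mem_closure {X : Set (I × G × Λ)} (i0 : I) (l0 : Λ) {x y : I × G × Λ}
    (hx : x ∈ X) (hy : y ∈ X) : reesNormalize P i0 l0 x.2.2 y.1 ∈
      Subgroup.closure (reesCoord P i0 l0 '' (X ∪ Set.image2 (reesMul P) X X)) := by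
  rw [reesNormalize_eq]
  exact mul_mem (mul_mem (inv_mem (Subgroup.subset_closure ⟨x, .inl hx, rfl⟩))
    (Subgroup.subset_closure ⟨_, .inr ⟨x, hx, y, hy, rfl⟩, rfl⟩))
    (inv_mem (Subgroup.subset_closure ⟨y, .inl hy, rfl⟩))

theorem reesCoord_mem_closure {X : Set (I × G × Λ)} (i0 : I) (l0 : Λ) {t : I × G × Λ}
    (ht : CSClosure (reesMul P) (reesInv P) X t) : reesCoord P i0 l0 t ∈
      Subgroup.closure (reesCoord P i0 l0 '' (X ∪ Set.image2 (reesMul P) X X)) := by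
  induction ht with
  | base hx => exact Subgroup.subset_closure ⟨_, .inl hx, rfl⟩
  | mul hx hy ihx ihy =>
    obtain ⟨-, a, ha, hax⟩ := exists_fst_snd_snd_of_mem_reesClosure hx
    obtain ⟨⟨b, hb, hby⟩, -⟩ := exists_fst_snd_snd_of_mem_reesClosure hy
    rw [reesCoord_reesMul, ← hax, ← hby]
    exact mul_mem (mul_mem ihx (reesNormalize_mem_closure i0 l0 ha hb)) ihy
  | inv hx ihx =>
    obtain ⟨⟨b, hb, hbx⟩, a, ha, hax⟩ := exists_fst_snd_snd_of_mem_reesClosure hx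
    have hc := reesNormalize_mem_closure (P := P) i0 l0 ha hb
    rw [reesCoord_reesInv, ← hax, ← hbx]
    exact mul_mem (mul_mem (inv_mem hc) (inv_mem ihx)) (inv_mem hc)

theorem IsHomogeneousGroup.exists_mulEquiv_extend (hG : IsHomogeneousGroup G) {V : Subgroup G}
    (hV : V.FG) {τ : V →* G} (hτ : Function.Injective τ) : ∃ θ : G ≃* G, ∀ v : V, θ v = τ v := by
  have : Group.FG V := (Group.fg_iff_subgroup_fg V).mpr hV
  obtain ⟨θ, hθ⟩ := hG V τ.range hV ((Group.fg_iff_subgroup_fg _).mp inferInstance)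
    (MonoidHom.ofInjective hτ)
  exact ⟨θ, fun v => (hθ v).trans (MonoidHom.ofInjective_apply hτ)⟩

theorem IsHomogeneousGroup.exists_mulEquiv_reesCoord_map (hG : IsHomogeneousGroup G)
    {X : Finset (I × G × Λ)} {φ : I × G × Λ → I × G × Λ}
    (hφ : ReesHomOn P (reesClosure P X) φ) (hinj : Set.InjOn φ (reesClosure P X))
    {t0 : I × G × Λ} (ht0 : t0 ∈ reesClosure P X) :
    ∃ θ : G ≃* G, ∀ t ∈ reesClosure P X,
      θ (reesCoord P t0.1 t0.2.2 t) = reesCoord P (φ t0).1 (φ t0).2.2 (φ t) := by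
  set V := Subgroup.closure (reesCoord P t0.1 t0.2.2 '' (↑X ∪ Set.image2 (reesMul P) ↑X ↑X))
  have he := reesBase_one_mem_reesClosure ht0
  have hV : ∀ g ∈ V, reesBase P t0.1 t0.2.2 g ∈ reesClosure P X := by
    intro g hg
    induction hg using Subgroup.closure_induction with
    | mem _ h =>
      obtain ⟨t, ht, rfl⟩ := h
      have ht : t ∈ reesClosure P X := by
        rcases ht with ht | ⟨a, ha, b, hb, rfl⟩
        · exact subset_reesClosure ht
        · exact reesMul_mem_reesClosure (subset_reesClosure ha) (subset_reesClosure hb)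
      rw [reesBase_reesCoord]
      exact reesMul_mem_reesClosure (reesMul_mem_reesClosure he ht) he
    | one => exact he
    | mul _ _ _ _ ha hb => rw [← reesMul_reesBase]; exact reesMul_mem_reesClosure ha hb
    | inv _ _ ha => rw [← reesInv_reesBase]; exact reesInv_mem_reesClosure ha
  let τ : V →* G := MonoidHom.mk' (fun g => reesCoord P (φ t0).1 (φ t0).2.2
      (φ (reesBase P t0.1 t0.2.2 g)))
    fun a b => reesCoord_map_reesBase_mul hφ ht0 (hV a a.2) (hV b b.2)
  have hτ : Function.Injective τ := fun a b h =>
    Subtype.ext (eq_of_reesCoord_map_reesBase_eq hφ hinj (hV a a.2) (hV b b.2) h)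
  have hVfg : V.FG := (Subgroup.fg_iff V).mpr ⟨_, rfl,
    (X.finite_toSet.union (X.finite_toSet.image2 _ X.finite_toSet)).image _⟩
  obtain ⟨θ, hθ⟩ := hG.exists_mulEquiv_extend hVfg hτ
  refine ⟨θ, fun t ht => ?_⟩
  rw [← reesCoord_map_reesBase_reesCoord hφ ht0 ht]
  exact hθ ⟨_, reesCoord_mem_closure t0.1 t0.2.2 ht⟩

end MaximalSubgroup

section Automorphisms

variable {G I Λ : Type*} [Group G] {P : Λ → I → G} {Φ : I × G × Λ → I × G × Λ}

theorem mem_reesClosure_univ (x : I × G × Λ) : x ∈ reesClosure P Set.univ :=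
  subset_reesClosure trivial

theorem reesHomOn_univ (hmul : ∀ x y, Φ (reesMul P x y) = reesMul P (Φ x) (Φ y)) :
    ReesHomOn P (reesClosure P Set.univ) Φ :=
  fun a _ b _ => hmul a b

theorem exists_equiv_fst_map_eq [Nonempty Λ] (hΦ : Function.Bijective Φ)
    (hmul : ∀ x y, Φ (reesMul P x y) = reesMul P (Φ x) (Φ y)) :
    ∃ α : I ≃ I, ∀ x, (Φ x).1 = α x.1 := by
  obtain ⟨l⟩ := ‹Nonempty Λ›
  obtain ⟨α, hα⟩ := exists_fst_map_eq (reesHomOn_univ hmul)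
  have hα' (x : I × G × Λ) := hα x (mem_reesClosure_univ x)
  refine ⟨Equiv.ofBijective α ⟨fun i j h => ?_, fun i => ?_⟩, hα'⟩
  · refine fst_eq_of_map_fst_eq (t := (i, 1, l)) (t' := (j, 1, l)) (reesHomOn_univ hmul)
      hΦ.injective.injOn (mem_reesClosure_univ _) (mem_reesClosure_univ _) ?_
    rw [hα', hα']
    exact h
  · obtain ⟨x, hx⟩ := hΦ.surjective (i, 1, l)
    exact ⟨x.1, by rw [← hα', hx]⟩

theorem exists_equiv_snd_snd_map_eq [Nonempty I] (hΦ : Function.Bijective Φ)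
    (hmul : ∀ x y, Φ (reesMul P x y) = reesMul P (Φ x) (Φ y)) :
    ∃ β : Λ ≃ Λ, ∀ x, (Φ x).2.2 = β x.2.2 := by
  obtain ⟨i⟩ := ‹Nonempty I›
  obtain ⟨β, hβ⟩ := exists_snd_snd_map_eq (reesHomOn_univ hmul)
  have hβ' (x : I × G × Λ) := hβ x (mem_reesClosure_univ x)
  refine ⟨Equiv.ofBijective β ⟨fun l m h => ?_, fun l => ?_⟩, hβ'⟩
  · refine snd_snd_eq_of_map_snd_snd_eq (t := (i, 1, l)) (t' := (i, 1, m))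
      (reesHomOn_univ hmul) hΦ.injective.injOn (mem_reesClosure_univ _)
      (mem_reesClosure_univ _) ?_
    rw [hβ', hβ']
    exact h
  · obtain ⟨x, hx⟩ := hΦ.surjective (i, 1, l)
    exact ⟨x.2.2, by rw [← hβ', hx]⟩

theorem exists_mulEquiv_reesCoord_map_of_bijective (hΦ : Function.Bijective Φ)
    (hmul : ∀ x y, Φ (reesMul P x y) = reesMul P (Φ x) (Φ y)) (i0 : I) (l0 : Λ) :
    ∃ θ : G ≃* G, ∀ x, θ (reesCoord P i0 l0 x) =
      reesCoord P (Φ (reesBase P i0 l0 1)).1 (Φ (reesBase P i0 l0 1)).2.2 (Φ x) := by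
  have ht0 := mem_reesClosure_univ (P := P) (reesBase P i0 l0 1)
  let τ : G →* G := MonoidHom.mk' (fun g => reesCoord P (Φ (reesBase P i0 l0 1)).1
      (Φ (reesBase P i0 l0 1)).2.2 (Φ (reesBase P i0 l0 g))) fun a b =>
    reesCoord_map_reesBase_mul (reesHomOn_univ hmul) ht0 (mem_reesClosure_univ _)
      (mem_reesClosure_univ _)
  have hτ (x : I × G × Λ) : τ (reesCoord P i0 l0 x) = reesCoord P (Φ (reesBase P i0 l0 1)).1
      (Φ (reesBase P i0 l0 1)).2.2 (Φ x) :=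
    reesCoord_map_reesBase_reesCoord (reesHomOn_univ hmul) ht0 (mem_reesClosure_univ x)
  refine ⟨MulEquiv.ofBijective τ ⟨fun a b h => ?_, fun g => ?_⟩, hτ⟩
  · exact eq_of_reesCoord_map_reesBase_eq (reesHomOn_univ hmul) hΦ.injective.injOn
      (mem_reesClosure_univ _) (mem_reesClosure_univ _) h
  · obtain ⟨x, hx⟩ := hΦ.surjective (reesBase P (Φ (reesBase P i0 l0 1)).1
      (Φ (reesBase P i0 l0 1)).2.2 g)
    exact ⟨reesCoord P i0 l0 x, by rw [hτ, hx, reesCoord_reesBase]⟩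

theorem exists_reesLift_eq (hΦ : Function.Bijective Φ)
    (hmul : ∀ x y, Φ (reesMul P x y) = reesMul P (Φ x) (Φ y)) (i0 : I) (l0 : Λ) :
    ∃ (θ : G ≃* G) (α : I ≃ I) (β : Λ ≃ Λ), ∀ x, Φ x = reesLift P P (θ : G →* G) α β i0 l0 x := by
  have : Nonempty I := ⟨i0⟩
  have : Nonempty Λ := ⟨l0⟩
  obtain ⟨θ, hθ⟩ := exists_mulEquiv_reesCoord_map_of_bijective hΦ hmul i0 l0
  obtain ⟨α, hα⟩ := exists_equiv_fst_map_eq hΦ hmul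
  obtain ⟨β, hβ⟩ := exists_equiv_snd_snd_map_eq hΦ hmul
  refine ⟨θ, α, β, fun x => eq_reesLift_of_reesCoord (hα x) (hβ x) ?_⟩
  have hα0 : α i0 = (Φ (reesBase P i0 l0 1)).1 := (hα (reesBase P i0 l0 1)).symm
  have hβ0 : β l0 = (Φ (reesBase P i0 l0 1)).2.2 := (hβ (reesBase P i0 l0 1)).symm
  rw [hα0, hβ0, ← hθ]
  rfl

end Automorphisms

section Structure

variable {G I Λ : Type*} [Group G] {P : Λ → I → G}

theorem IsHomogeneousGroup.exists_reesLift_eqOn (hG : IsHomogeneousGroup G)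
    {X : Finset (I × G × Λ)} {φ : I × G × Λ → I × G × Λ}
    (hφ : ReesHomOn P (reesClosure P X) φ) (hinj : Set.InjOn φ (reesClosure P X))
    {t0 : I × G × Λ} (ht0 : t0 ∈ reesClosure P X) :
    ∃ (θ : G ≃* G) (α : I → I) (β : Λ → Λ), Set.InjOn α (Prod.fst '' reesClosure P X) ∧
      Set.InjOn β ((fun x => x.2.2) '' reesClosure P X) ∧
      ∀ t ∈ reesClosure P X, φ t = reesLift P P (θ : G →* G) α β t0.1 t0.2.2 t := by
  obtain ⟨θ, hθ⟩ := hG.exists_mulEquiv_reesCoord_map hφ hinj ht0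
  obtain ⟨α, hα⟩ := exists_fst_map_eq hφ
  obtain ⟨β, hβ⟩ := exists_snd_snd_map_eq hφ
  refine ⟨θ, α, β, ?_, ?_, fun t ht => eq_reesLift_of_reesCoord (hα t ht) (hβ t ht) ?_⟩
  · rintro _ ⟨t, ht, rfl⟩ _ ⟨t', ht', rfl⟩ h
    exact fst_eq_of_map_fst_eq hφ hinj ht ht' (by rw [hα t ht, hα t' ht', h])
  · rintro _ ⟨t, ht, rfl⟩ _ ⟨t', ht', rfl⟩ h
    exact snd_snd_eq_of_map_snd_snd_eq hφ hinj ht ht' (by rw [hβ t ht, hβ t' ht', h])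
  · rw [← hα t0 ht0, ← hβ t0 ht0]
    exact (hθ t ht).symm

theorem map_reesNormalize_eq_of_eqOn {X : Set (I × G × Λ)} {φ : I × G × Λ → I × G × Λ}
    (hφ : ReesHomOn P (reesClosure P X) φ) {θ : G →* G} {α : I → I} {β : Λ → Λ} {i0 : I}
    {l0 : Λ} (hφθ : ∀ t ∈ reesClosure P X, φ t = reesLift P P θ α β i0 l0 t) {x y : I × G × Λ}
    (hx : x ∈ reesClosure P X) (hy : y ∈ reesClosure P X) :
    θ (reesNormalize P i0 l0 x.2.2 y.1) = reesNormalize P (α i0) (β l0) (β x.2.2) (α y.1) := by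
  refine (reesLift_reesMul_iff θ α β i0 l0 x y).mp ?_
  rw [← hφθ x hx, ← hφθ y hy, ← hφθ _ (reesMul_mem_reesClosure hx hy), hφ x hx y hy]

theorem reesClosure_prod_univ_prod (s : Set I) (t : Set Λ) :
    reesClosure P (s ×ˢ Set.univ ×ˢ t) = s ×ˢ Set.univ ×ˢ t :=
  setOf_CSClosure_of_closed (fun _ ha _ hb => ⟨ha.1, trivial, hb.2.2⟩)
    (fun _ ha => ⟨ha.1, trivial, ha.2.2⟩)

theorem IsCSHomogeneous.exists_equiv_reesNormalize [Finite G]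
    (hS : IsCSHomogeneous (reesMul P) (reesInv P)) (θ : G ≃* G) {I1 : Finset I}
    {Λ1 : Finset Λ} {α : I → I} {β : Λ → Λ} (hα : Set.InjOn α I1) (hβ : Set.InjOn β Λ1)
    {i0 : I} {l0 : Λ} (hi0 : i0 ∈ I1) (hl0 : l0 ∈ Λ1)
    (hc : ∀ l ∈ Λ1, ∀ j ∈ I1,
      θ (reesNormalize P i0 l0 l j) = reesNormalize P (α i0) (β l0) (β l) (α j)) :
    ∃ (α' : I ≃ I) (β' : Λ ≃ Λ), Set.EqOn α' α I1 ∧ Set.EqOn β' β Λ1 ∧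
      ∀ l j, θ (reesNormalize P i0 l0 l j) = reesNormalize P (α' i0) (β' l0) (β' l) (α' j) := by
  classical
  have := Fintype.ofFinite G
  have hbox : ∀ (s : Finset I) (t : Finset Λ),
      {x | CSClosure (reesMul P) (reesInv P)
        ((s ×ˢ (Finset.univ : Finset G) ×ˢ t : Finset (I × G × Λ)) : Set (I × G × Λ)) x} =
        (s : Set I) ×ˢ Set.univ ×ˢ (t : Set Λ) := fun s t => by
    simp only [Finset.coe_product, Finset.coe_univ]
    exact reesClosure_prod_univ_prod _ _
  obtain ⟨Φ, hΦ, hΦmul, hΦext⟩ := hS (I1 ×ˢ Finset.univ ×ˢ Λ1)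
    (I1.image α ×ˢ Finset.univ ×ˢ Λ1.image β) (reesLift P P (θ : G →* G) α β i0 l0)
    (by rw [hbox, hbox, Finset.coe_image, Finset.coe_image]; exact reesMap_bijOn θ _ _ hα hβ)
    fun x y hx hy => (reesLift_reesMul_iff _ _ _ _ _ x y).mpr
      (hc _ ((hbox _ _).subset hx).2.2 _ ((hbox _ _).subset hy).1)
  obtain ⟨θ', α', β', hΦ'⟩ := exists_reesLift_eq hΦ hΦmul i0 l0
  obtain ⟨hα', hβ', hθ'⟩ := eqOn_of_reesLift_eqOn (s := I1) (t := Λ1) hi0 hl0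
    fun x hx => (hΦ' x).symm.trans (hΦext x ((hbox I1 Λ1).symm.subset hx))
  refine ⟨α', β', hα', hβ', fun l j => ?_⟩
  have h := (reesLift_reesMul_iff (θ' : G →* G) α' β' i0 l0 (j, 1, l) (j, 1, l)).mp
    (by rw [← hΦ', ← hΦ', hΦmul])
  exact (hθ' _).symm.trans h

end Structure

section Entries

variable {G I Λ : Type*} [Group G] {P : Λ → I → G}

theorem MulEquiv.exists_restrict_closure {s : Set G} (θ : G ≃* G) (hθ : θ '' s = s) :
    ∃ θ' : Subgroup.closure s ≃* Subgroup.closure s, ∀ k, (θ' k : G) = θ k := by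
  have h : (Subgroup.closure s).map (θ : G →* G) = Subgroup.closure s := by
    rw [MonoidHom.map_closure]
    exact congrArg Subgroup.closure hθ
  exact ⟨(θ.subgroupMap _).trans (MulEquiv.subgroupCongr h), fun _ => rfl⟩

theorem coe_reesNormalize_reesEntriesMatrix (i0 : I) (l0 : Λ) (l : Λ) (j : I) :
    ((reesNormalize (reesEntriesMatrix P) i0 l0 l j : Subgroup.closure (reesEntries P)) : G) =
      reesNormalize P i0 l0 l j :=
  map_reesNormalize (Subgroup.closure (reesEntries P)).subtype i0 l0 l j

theorem IsCSHomogeneous.exists_equiv_reesNormalize_of_reesEntriesMatrix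
    [Finite (Subgroup.closure (reesEntries P))]
    (hE : IsCSHomogeneous (reesMul (reesEntriesMatrix P)) (reesInv (reesEntriesMatrix P)))
    (θ : G ≃* G) (hθ : θ '' reesEntries P = reesEntries P) {I1 : Finset I} {Λ1 : Finset Λ}
    {α : I → I} {β : Λ → Λ} (hα : Set.InjOn α I1) (hβ : Set.InjOn β Λ1) {i0 : I} {l0 : Λ}
    (hi0 : i0 ∈ I1) (hl0 : l0 ∈ Λ1)
    (hc : ∀ l ∈ Λ1, ∀ j ∈ I1,
      θ (reesNormalize P i0 l0 l j) = reesNormalize P (α i0) (β l0) (β l) (α j)) :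
    ∃ (α' : I ≃ I) (β' : Λ ≃ Λ), Set.EqOn α' α I1 ∧ Set.EqOn β' β Λ1 ∧
      ∀ l j, θ (reesNormalize P i0 l0 l j) = reesNormalize P (α' i0) (β' l0) (β' l) (α' j) := by
  obtain ⟨θK, hθK⟩ := θ.exists_restrict_closure hθ
  obtain ⟨α', β', hα', hβ', hc'⟩ := hE.exists_equiv_reesNormalize θK hα hβ hi0 hl0
    fun l hl j hj => Subtype.ext (by
      rw [hθK, coe_reesNormalize_reesEntriesMatrix, coe_reesNormalize_reesEntriesMatrix]
      exact hc l hl j hj)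
  refine ⟨α', β', hα', hβ', fun l j => ?_⟩
  have h := congrArg Subtype.val (hc' l j)
  rwa [hθK, coe_reesNormalize_reesEntriesMatrix, coe_reesNormalize_reesEntriesMatrix] at h

theorem IsCSHomogeneous.of_reesEntriesMatrix [Finite (Subgroup.closure (reesEntries P))]
    (hG : IsHomogeneousGroup G)
    (hE : IsCSHomogeneous (reesMul (reesEntriesMatrix P)) (reesInv (reesEntriesMatrix P)))
    (hchar : ∀ θ : G ≃* G, θ '' reesEntries P = reesEntries P) :
    IsCSHomogeneous (reesMul P) (reesInv P) := by
  classical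
  intro X Y φ hφ hφmul
  rcases X.eq_empty_or_nonempty with rfl | ⟨t0, ht0⟩
  · refine ⟨id, Function.bijective_id, fun _ _ => rfl, fun x hx => ?_⟩
    exact absurd (CSClosure.mem_of_closed (T := ∅) (by simp) (by simp) (by simp) hx)
      (Set.notMem_empty x)
  have hT : ReesHomOn P (reesClosure P X) φ := fun a ha b hb => hφmul a b ha hb
  obtain ⟨θ, α, β, hα, hβ, hφθ⟩ :=
    hG.exists_reesLift_eqOn hT hφ.injOn (subset_reesClosure (P := P) ht0)
  set I1 := X.image Prod.fst
  set Λ1 := X.image (fun x => x.2.2)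
  obtain ⟨α', β', hα', hβ', hc'⟩ := hE.exists_equiv_reesNormalize_of_reesEntriesMatrix θ
    (hchar θ) (I1 := I1) (Λ1 := Λ1)
    (hα.mono (by rw [Finset.coe_image]; exact Set.image_mono subset_reesClosure))
    (hβ.mono (by rw [Finset.coe_image]; exact Set.image_mono subset_reesClosure))
    (Finset.mem_image_of_mem _ ht0) (Finset.mem_image_of_mem _ ht0) (by
      simp only [I1, Λ1, Finset.mem_image]
      rintro _ ⟨x, hx, rfl⟩ _ ⟨y, hy, rfl⟩
      exact map_reesNormalize_eq_of_eqOn hT hφθ (subset_reesClosure hx) (subset_reesClosure hy))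
  refine ⟨reesLift P P (θ : G →* G) α' β' t0.1 t0.2.2, reesLift_bijective θ α' β' _ _,
    fun x y => (reesLift_reesMul_iff _ _ _ _ _ x y).mpr (hc' _ _), fun t ht => ?_⟩
  obtain ⟨⟨a, ha, hat⟩, b, hb, hbt⟩ := exists_fst_snd_snd_of_mem_reesClosure ht
  have hrow : t.1 ∈ I1 := hat ▸ Finset.mem_image_of_mem _ ha
  have hcol : t.2.2 ∈ Λ1 := hbt ▸ Finset.mem_image_of_mem _ hb
  rw [hφθ t ht]
  exact reesLift_congr (hα' hrow) (hα' (Finset.mem_image_of_mem _ ht0)) (hβ' hcol)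
    (hβ' (Finset.mem_image_of_mem _ ht0))

end Entries

section Forward

variable {G I Λ : Type*} [Group G] {P : Λ → I → G}

theorem setOf_CSClosure_image_reesBase (i0 : I) (l0 : Λ) (s : Set G) :
    {x | CSClosure (reesMul P) (reesInv P) (reesBase P i0 l0 '' insert 1 s) x} =
      reesBase P i0 l0 '' Subgroup.closure s := by
  rw [setOf_CSClosure_image (fun a b => (reesMul_reesBase i0 l0 a b).symm)
    (fun a => (reesInv_reesBase i0 l0 a).symm), setOf_CSClosure_mul_inv (Set.insert_nonempty _ _),
    Subgroup.closure_insert_one]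

theorem bijOn_image_reesBase (i0 : I) (l0 : Λ) {A B : Subgroup G} (e : A ≃* B)
    {ψ : I × G × Λ → I × G × Λ} (hψ : ∀ a : A, ψ (reesBase P i0 l0 a) = reesBase P i0 l0 (e a)) :
    Set.BijOn ψ (reesBase P i0 l0 '' A) (reesBase P i0 l0 '' B) := by
  refine ⟨?_, ?_, ?_⟩
  · rintro _ ⟨a, ha, rfl⟩
    exact ⟨_, (e ⟨a, ha⟩).2, (hψ ⟨a, ha⟩).symm⟩
  · rintro _ ⟨a, ha, rfl⟩ _ ⟨b, hb, rfl⟩ h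
    rw [hψ ⟨a, ha⟩, hψ ⟨b, hb⟩] at h
    exact congrArg _ (congrArg Subtype.val (e.injective (Subtype.ext (reesBase_injective i0 l0 h))))
  · rintro _ ⟨b, hb, rfl⟩
    refine ⟨_, ⟨_, (e.symm ⟨b, hb⟩).2, rfl⟩, ?_⟩
    rw [hψ, MulEquiv.apply_symm_apply]

theorem IsCSHomogeneous.exists_extend_of_mulEquiv (hS : IsCSHomogeneous (reesMul P) (reesInv P))
    (i0 : I) (l0 : Λ) {A B : Subgroup G} (hA : A.FG) (e : A ≃* B) :
    ∃ Φ : I × G × Λ → I × G × Λ, Function.Bijective Φ ∧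
      (∀ x y, Φ (reesMul P x y) = reesMul P (Φ x) (Φ y)) ∧
      ∀ a : A, Φ (reesBase P i0 l0 a) = reesBase P i0 l0 (e a) := by
  classical
  have : Group.FG A := (Group.fg_iff_subgroup_fg A).mpr hA
  obtain ⟨sB, hsB⟩ : B.FG := (Group.fg_iff_subgroup_fg B).mp
    (Group.fg_of_surjective (f := (e : A →* B)) e.surjective)
  obtain ⟨sA, hsA⟩ := hA
  have hclosure (s : Finset G) :
      {x | CSClosure (reesMul P) (reesInv P) ((insert 1 s).image (reesBase P i0 l0) : Set _) x} =
        reesBase P i0 l0 '' Subgroup.closure (s : Set G) := by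
    rw [Finset.coe_image, Finset.coe_insert, setOf_CSClosure_image_reesBase]
  let ψ := Function.extend (fun a : A => reesBase P i0 l0 a) (fun a => reesBase P i0 l0 (e a)) id
  have hψ (a : A) : ψ (reesBase P i0 l0 a) = reesBase P i0 l0 (e a) :=
    ((reesBase_injective i0 l0).comp Subtype.val_injective).extend_apply _ _ a
  obtain ⟨Φ, hΦ, hΦmul, hΦψ⟩ := hS ((insert 1 sA).image (reesBase P i0 l0))
    ((insert 1 sB).image (reesBase P i0 l0)) ψ
    (by rw [hclosure, hclosure, hsA, hsB]; exact bijOn_image_reesBase i0 l0 e hψ) (by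
      rintro _ _ hx hy
      obtain ⟨a, ha, rfl⟩ := (hsA ▸ hclosure sA).subset hx
      obtain ⟨b, hb, rfl⟩ := (hsA ▸ hclosure sA).subset hy
      rw [reesMul_reesBase, hψ ⟨a * b, mul_mem ha hb⟩, hψ ⟨a, ha⟩, hψ ⟨b, hb⟩, reesMul_reesBase]
      exact congrArg _ (congrArg Subtype.val (map_mul e ⟨a, ha⟩ ⟨b, hb⟩)))
  refine ⟨Φ, hΦ, hΦmul, fun a => (hΦψ _ ?_).trans (hψ a)⟩
  change _ ∈ {x | CSClosure (reesMul P) (reesInv P) _ x}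
  rw [hclosure, hsA]
  exact ⟨a, a.2, rfl⟩

theorem IsCSHomogeneous.isHomogeneousGroup [Nonempty I] [Nonempty Λ]
    (hS : IsCSHomogeneous (reesMul P) (reesInv P)) : IsHomogeneousGroup G := by
  intro A B hA _ e
  obtain ⟨i0⟩ := ‹Nonempty I›
  obtain ⟨l0⟩ := ‹Nonempty Λ›
  obtain ⟨Φ, hΦ, hΦmul, hΦe⟩ := hS.exists_extend_of_mulEquiv i0 l0 hA e
  obtain ⟨θ, α, β, hΦθ⟩ := exists_reesLift_eq hΦ hΦmul i0 l0
  have h1 : Φ (reesBase P i0 l0 1) = reesBase P i0 l0 1 := by simpa using hΦe 1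
  rw [hΦθ] at h1
  have hα0 : α i0 = i0 := congrArg Prod.fst h1
  have hβ0 : β l0 = l0 := congrArg (fun x => x.2.2) h1
  refine ⟨θ, fun a => ?_⟩
  calc θ a = θ (reesCoord P i0 l0 (reesBase P i0 l0 a)) := by rw [reesCoord_reesBase]
    _ = reesCoord P (α i0) (β l0) (Φ (reesBase P i0 l0 a)) := by
      rw [hΦθ, reesCoord_reesLift]; rfl
    _ = e a := by rw [hα0, hβ0, hΦe, reesCoord_reesBase]

end Forward

section Normalised

variable {G I Λ : Type*} [Group G] {P : Λ → I → G} {iI : I} {lL : Λ}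

theorem snd_fst_map_mem_of_normalised (hrow : ∀ j, P lL j = 1) (hcol : ∀ m, P m iI = 1)
    {K : Subgroup G} (hK : (K : Set G) = reesEntries P) {Φ : I × G × Λ → I × G × Λ}
    (hmul : ∀ x y, Φ (reesMul P x y) = reesMul P (Φ x) (Φ y)) {x : I × G × Λ}
    (hx : x.2.1 ∈ K) : (Φ x).2.1 ∈ K := by
  have hP (l : Λ) (i : I) : P l i ∈ K := by
    change P l i ∈ (K : Set G)
    exact hK ▸ ⟨l, i, rfl⟩
  have hmulK {a b : I × G × Λ} (ha : a.2.1 ∈ K) (hb : b.2.1 ∈ K) : (reesMul P a b).2.1 ∈ K :=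
    mul_mem (mul_mem ha (hP _ _)) hb
  have hidem {f : I × G × Λ} (hf : reesMul P f f = f) : (Φ f).2.1 ∈ K := by
    rw [eq_reesBase_one_of_idempotent (f := Φ f) (by rw [← hmul, hf]), reesBase, mul_one]
    exact inv_mem (hP _ _)
  obtain ⟨i, g, l⟩ := x
  obtain ⟨m, j, rfl⟩ : g ∈ reesEntries P := hK ▸ hx
  -- `(i, P m j, l)` is a product of idempotents, since `P` is normalised
  have hdecomp : (i, P m j, l) =
      reesMul P (reesMul P (reesMul P (i, 1, lL) (iI, 1, m)) (j, 1, lL)) (iI, 1, l) := by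
    simp [reesMul, hrow]
  rw [hdecomp, hmul, hmul, hmul]
  exact hmulK (hmulK (hmulK (hidem (by simp [reesMul, hrow])) (hidem (by simp [reesMul, hcol])))
    (hidem (by simp [reesMul, hrow]))) (hidem (by simp [reesMul, hcol]))

theorem IsCSHomogeneous.reesEntriesMatrix (hS : IsCSHomogeneous (reesMul P) (reesInv P))
    (hrow : ∀ j, P lL j = 1) (hcol : ∀ m, P m iI = 1)
    (hE : ((Subgroup.closure (reesEntries P) : Subgroup G) : Set G) = reesEntries P) :
    IsCSHomogeneous (reesMul (reesEntriesMatrix P)) (reesInv (reesEntriesMatrix P)) := by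
  refine hS.of_injective (ι := fun t => (t.1, (t.2.1 : G), t.2.2)) ?_ (fun _ _ => rfl)
    (fun _ => rfl) fun Φ _ hmul a => ?_
  · rintro ⟨i, g, l⟩ ⟨j, h, m⟩ hx
    simp only [Prod.mk.injEq] at hx
    simp [hx.1, Subtype.ext hx.2.1, hx.2.2]
  · exact ⟨((Φ _).1, ⟨_, snd_fst_map_mem_of_normalised hrow hcol hE hmul a.2.1.2⟩, (Φ _).2.2), rfl⟩

theorem IsCSHomogeneous.image_reesEntries (hS : IsCSHomogeneous (reesMul P) (reesInv P))
    (hrow : ∀ j, P lL j = 1) (hcol : ∀ m, P m iI = 1)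
    (hE : ((Subgroup.closure (reesEntries P) : Subgroup G) : Set G) = reesEntries P)
    [Finite (Subgroup.closure (reesEntries P))] (θ : G ≃* G) :
    θ '' reesEntries P = reesEntries P := by
  suffices h : ∀ θ : G ≃* G, ∀ g ∈ reesEntries P, θ g ∈ reesEntries P from
    Set.Subset.antisymm (Set.image_subset_iff.mpr (h θ)) fun g hg =>
      ⟨θ.symm g, h θ.symm g hg, θ.apply_symm_apply g⟩
  intro θ g hg
  set K := Subgroup.closure (reesEntries P)
  have hK : K.FG := (Group.fg_iff_subgroup_fg K).mp inferInstance
  obtain ⟨Φ, -, hmul, hΦ⟩ := hS.exists_extend_of_mulEquiv iI lL hK (θ.subgroupMap K)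
  have hgK : g ∈ K := Subgroup.subset_closure hg
  have h := snd_fst_map_mem_of_normalised hrow hcol hE hmul (x := reesBase P iI lL g)
    (by simpa [reesBase, hrow] using hgK)
  rw [hΦ ⟨g, hgK⟩] at h
  simpa [reesBase, hrow, ← hE] using h

end Normalised

theorem rees_homogeneous_iff_of_simple_abelian_general {G I Λ : Type*} [Group G]
    [Nonempty I] [Nonempty Λ]
    (P : Λ → I → G) (iI : I) (lL : Λ)
    (hrow : ∀ j : I, P lL j = 1) (hcol : ∀ m : Λ, P m iI = 1)
    (K : Subgroup G) (hK : (K : Set G) = reesEntries P)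
    (hsimple : K = ⊥ ∨ ∃ p : ℕ, p.Prime ∧ Nat.card K = p) :
    IsCSHomogeneous (reesMul P) (reesInv P) ↔
      IsHomogeneousGroup G ∧
      IsCSHomogeneous (reesMul (reesEntriesMatrix P)) (reesInv (reesEntriesMatrix P)) ∧
      (∀ θ : G ≃* G, θ '' reesEntries P = reesEntries P) := by
  have hKE : Subgroup.closure (reesEntries P) = K := by rw [← hK, Subgroup.closure_eq]
  have hE : ((Subgroup.closure (reesEntries P) : Subgroup G) : Set G) = reesEntries P := by
    rw [hKE, hK]
  have : Finite K := by
    rcases hsimple with rfl | ⟨p, hp, hcard⟩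
    · infer_instance
    · exact Nat.finite_of_card_ne_zero (hcard ▸ hp.ne_zero)
  have : Finite (Subgroup.closure (reesEntries P)) := hKE ▸ this
  exact ⟨fun hS => ⟨hS.isHomogeneousGroup, hS.reesEntriesMatrix hrow hcol hE,
      hS.image_reesEntries hrow hcol hE⟩,
    fun ⟨hG, hE', hchar⟩ => IsCSHomogeneous.of_reesEntriesMatrix hG hE' hchar⟩

/-- Let `S = M[G;I,Λ;P]` be a normalised Rees matrix semigroup over a
countable group `G` (countable nonempty index sets) such that the entry set `G^P` is a
subgroup of `G` which is trivial or cyclic of prime order. Then `S` is homogeneous as a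
completely simple semigroup iff `G` is homogeneous, `⟨E(S)⟩` is homogeneous as a
completely simple semigroup, and `G^P` is a characteristic subgroup of `G`. -/
theorem rees_homogeneous_iff_of_simple_abelian {G I Λ : Type*} [Group G] [Countable G]
    [Countable I] [Countable Λ] [Nonempty I] [Nonempty Λ]
    (P : Λ → I → G) (iI : I) (lL : Λ)
    (hrow : ∀ j : I, P lL j = 1) (hcol : ∀ m : Λ, P m iI = 1)
    (K : Subgroup G) (hK : (K : Set G) = reesEntries P)
    (hsimple : K = ⊥ ∨ ∃ p : ℕ, p.Prime ∧ Nat.card K = p) :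
    IsCSHomogeneous (reesMul P) (reesInv P) ↔
      IsHomogeneousGroup G ∧
      IsCSHomogeneous (reesMul (reesEntriesMatrix P)) (reesInv (reesEntriesMatrix P)) ∧
      (∀ θ : G ≃* G, θ '' reesEntries P = reesEntries P) :=
  rees_homogeneous_iff_of_simple_abelian_general P iI lL hrow hcol K hK hsimple
end

section
/- Let G be a countable group, let I and Λ be nonempty countable sets, let B = I × Λ be the rectangular band with multiplication (i,λ)(j,μ) = (i,μ), and let S = G × B be the rectangular group with componentwise multiplication. Then S is homogeneous as a completely simple semigroup if and only if G is a homogeneous group. -/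
/-! In `G × I × Λ` the completely simple subsemigroup generated by `X` is
`⟨X₁⟩ × X₂ × X₃`: the subgroup generated by the `G`-components of `X`, times the sets of
`I`- and `Λ`-components occurring in `X`. For `(i₀, l₀)` taken from `X`, the factorisation
`(g, i, l) = (1, i, l₀) (g, i₀, l₀) (1, i₀, l)` splits every homomorphism on such a
subsemigroup as `θ × ψ × χ` with `θ` a group homomorphism on `⟨X₁⟩`, and an isomorphism onto
another such subsemigroup gives an isomorphism `θ` of subgroups and injective `ψ`, `χ` on the
finite index sets. So extending it to an automorphism reduces to extending `θ` to an
automorphism of `G`, as `ψ` and `χ` always extend to permutations. Conversely, an isomorphism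
of finitely generated subgroups acts on `G × {(i₀, l₀)}`, and the group part of any
automorphism extending that action is an automorphism of `G` extending it. -/

open Set

theorem Set.InjOn.exists_perm_eqOn {α : Type*} {f : α → α} {s : Set α} (hs : s.Finite)
    (hf : InjOn f s) : ∃ σ : Equiv.Perm α, EqOn σ f s := by
  have := hs.to_subtype
  obtain ⟨σ, hσ⟩ := Equiv.Perm.exists_extending_pair (fun x : s => (x : α)) (s.domRestrict f)
    Subtype.val_injective hf.injective
  exact ⟨σ, fun x hx => hσ ⟨x, hx⟩⟩

namespace Subgroup

variable {G H : Type*} [Group G] [Group H] {A : Subgroup G} {B : Subgroup H}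

noncomputable def mulEquivOfBijOn (f : G → H) (hf : BijOn f A B)
    (hmul : ∀ a ∈ A, ∀ b ∈ A, f (a * b) = f a * f b) : A ≃* B :=
  { hf.equiv f with map_mul' := fun a b => Subtype.ext (hmul a a.2 b b.2) }

theorem exists_bijOn_extension (e : A ≃* B) :
    ∃ f : G → H, BijOn f A B ∧ (∀ a ∈ A, ∀ b ∈ A, f (a * b) = f a * f b) ∧
      ∀ a : A, f a = e a := by
  classical
  refine ⟨fun g => if h : g ∈ A then e ⟨g, h⟩ else 1, ⟨fun a ha => ?_, fun a ha b hb hab => ?_,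
    fun b hb => ?_⟩, fun a ha b hb => ?_, fun a => dif_pos a.2⟩
  · simp [SetLike.mem_coe.1 ha]
  · simpa [SetLike.mem_coe.1 ha, SetLike.mem_coe.1 hb, Subtype.ext_iff] using hab
  · exact ⟨e.symm ⟨b, hb⟩, (e.symm _).2, by simp⟩
  · simp only [ha, hb, mul_mem ha hb, dite_true]
    exact congrArg Subtype.val (map_mul e ⟨a, ha⟩ ⟨b, hb⟩)

end Subgroup

section RectangularGroup

variable {G I Λ : Type*} [Group G]

abbrev rectMul (x y : G × I × Λ) : G × I × Λ := (x.1 * y.1, x.2.1, y.2.2)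

abbrev rectInv (x : G × I × Λ) : G × I × Λ := (x.1⁻¹, x.2.1, x.2.2)

def rectSpan (X : Set (G × I × Λ)) : Set (G × I × Λ) := {s | CSClosure rectMul rectInv X s}

theorem mk_one_mem_rectSpan {X : Set (G × I × Λ)} {a : G × I × Λ} (ha : a ∈ X) :
    ((1 : G), a.2.1, a.2.2) ∈ rectSpan X := by
  simpa [rectSpan, rectMul, rectInv] using
    (CSClosure.base (op := rectMul) (star := rectInv) ha).mul (CSClosure.base ha).inv

theorem mem_rectSpan_of_mem_closure {X : Set (G × I × Λ)} {a : G × I × Λ} (ha : a ∈ X) {g : G}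
    (hg : g ∈ Subgroup.closure (Prod.fst '' X)) : (g, a.2.1, a.2.2) ∈ rectSpan X := by
  induction hg using Subgroup.closure_induction with
  | mem _ hx =>
    obtain ⟨y, hy, rfl⟩ := hx
    simpa [rectMul, rectSpan] using
      ((mk_one_mem_rectSpan ha).mul (CSClosure.base hy)).mul (mk_one_mem_rectSpan ha)
  | one => exact mk_one_mem_rectSpan ha
  | mul _ _ _ _ hx hy => exact hx.mul hy
  | inv _ _ hx => exact hx.inv

theorem mem_rectSpan_iff {X : Set (G × I × Λ)} {s : G × I × Λ} :
    s ∈ rectSpan X ↔ s.1 ∈ Subgroup.closure (Prod.fst '' X) ∧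
      s.2.1 ∈ (fun x => x.2.1) '' X ∧ s.2.2 ∈ (fun x => x.2.2) '' X := by
  constructor
  · intro h
    induction h with
    | base hx => exact ⟨Subgroup.subset_closure ⟨_, hx, rfl⟩, ⟨_, hx, rfl⟩, ⟨_, hx, rfl⟩⟩
    | mul _ _ hx hy => exact ⟨mul_mem hx.1 hy.1, hx.2.1, hy.2.2⟩
    | inv _ hx => exact ⟨inv_mem hx.1, hx.2⟩
  · obtain ⟨g, i, l⟩ := s
    rintro ⟨hg, ⟨a, ha, rfl⟩, ⟨b, hb, rfl⟩⟩
    simpa [rectMul, rectSpan] using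
      (mem_rectSpan_of_mem_closure ha hg).mul (mk_one_mem_rectSpan hb)

theorem rectSpan_univ : rectSpan (univ : Set (G × I × Λ)) = univ :=
  eq_univ_of_forall fun _ => CSClosure.base trivial

theorem rectSpan_image_insert_one (T : Set G) (i₀ : I) (l₀ : Λ) :
    rectSpan ((fun g => (g, i₀, l₀)) '' insert 1 T) =
      (Subgroup.closure T : Set G) ×ˢ {(i₀, l₀)} := by
  ext ⟨g, i, l⟩
  simp [mem_rectSpan_iff, image_image, Subgroup.closure_insert_one, eq_comm]

variable {X Y : Set (G × I × Λ)} {φ : G × I × Λ → G × I × Λ} {i₀ : I} {l₀ : Λ}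

def IsRectHomOn (φ : G × I × Λ → G × I × Λ) (T : Set (G × I × Λ)) : Prop :=
  ∀ x y, x ∈ T → y ∈ T → φ (rectMul x y) = rectMul (φ x) (φ y)

def groupPart (φ : G × I × Λ → G × I × Λ) (i₀ : I) (l₀ : Λ) (g : G) : G := (φ (g, i₀, l₀)).1

def leftPart (φ : G × I × Λ → G × I × Λ) (l₀ : Λ) (i : I) : I := (φ (1, i, l₀)).2.1

def rightPart (φ : G × I × Λ → G × I × Λ) (i₀ : I) (l : Λ) : Λ := (φ (1, i₀, l)).2.2

theorem fst_map_one_eq_one (hφ : IsRectHomOn φ (rectSpan X)) {i : I} {l : Λ}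
    (h : ((1 : G), i, l) ∈ rectSpan X) : (φ (1, i, l)).1 = 1 := by
  have hsq := congrArg Prod.fst (hφ _ _ h h)
  simp only [rectMul, mul_one] at hsq
  exact right_eq_mul.mp hsq

theorem map_eq_of_mem_rectSpan (hφ : IsRectHomOn φ (rectSpan X))
    (hi₀ : i₀ ∈ (fun x => x.2.1) '' X) (hl₀ : l₀ ∈ (fun x => x.2.2) '' X)
    {s : G × I × Λ} (hs : s ∈ rectSpan X) :
    φ s = (groupPart φ i₀ l₀ s.1, leftPart φ l₀ s.2.1, rightPart φ i₀ s.2.2) := by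
  obtain ⟨g, i, l⟩ := s
  obtain ⟨hg, hi, hl⟩ := mem_rectSpan_iff.1 hs
  have mem {g' i' l'} (hg' : g' ∈ Subgroup.closure (Prod.fst '' X))
      (hi' : i' ∈ (fun x => x.2.1) '' X) (hl' : l' ∈ (fun x => x.2.2) '' X) :
      (g', i', l') ∈ rectSpan X :=
    mem_rectSpan_iff.2 ⟨hg', hi', hl'⟩
  -- `(g, i, l) = (1, i, l₀) (g, i₀, l₀) (1, i₀, l)`
  have h₁ := hφ _ _ (mem (one_mem _) hi hl₀) (mem hg hi₀ hl₀)
  have h₂ := hφ _ _ (mem hg hi hl₀) (mem (one_mem _) hi₀ hl)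
  simp only [rectMul, one_mul, mul_one] at h₁ h₂
  rw [h₂, h₁, fst_map_one_eq_one hφ (mem (one_mem _) hi hl₀),
    fst_map_one_eq_one hφ (mem (one_mem _) hi₀ hl), one_mul, mul_one]
  rfl

theorem groupPart_mul (hφ : IsRectHomOn φ (rectSpan X))
    (hi₀ : i₀ ∈ (fun x => x.2.1) '' X) (hl₀ : l₀ ∈ (fun x => x.2.2) '' X) {g h : G}
    (hg : g ∈ Subgroup.closure (Prod.fst '' X))
    (hh : h ∈ Subgroup.closure (Prod.fst '' X)) :
    groupPart φ i₀ l₀ (g * h) = groupPart φ i₀ l₀ g * groupPart φ i₀ l₀ h :=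
  congrArg Prod.fst <| hφ (g, i₀, l₀) (h, i₀, l₀)
    (mem_rectSpan_iff.2 ⟨hg, hi₀, hl₀⟩) (mem_rectSpan_iff.2 ⟨hh, hi₀, hl₀⟩)

theorem bijOn_groupPart (hφ : IsRectHomOn φ (rectSpan X))
    (hi₀ : i₀ ∈ (fun x => x.2.1) '' X) (hl₀ : l₀ ∈ (fun x => x.2.2) '' X)
    (hbij : BijOn φ (rectSpan X) (rectSpan Y)) :
    BijOn (groupPart φ i₀ l₀) (Subgroup.closure (Prod.fst '' X))
      (Subgroup.closure (Prod.fst '' Y)) := by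
  have mem {g} (hg : g ∈ Subgroup.closure (Prod.fst '' X)) : (g, i₀, l₀) ∈ rectSpan X :=
    mem_rectSpan_iff.2 ⟨hg, hi₀, hl₀⟩
  refine ⟨fun g hg => (mem_rectSpan_iff.1 (hbij.mapsTo (mem hg))).1, fun g hg h hh hgh => ?_,
    fun b hb => ?_⟩
  · have := hbij.injOn (mem hg) (mem hh) <| by
      rw [map_eq_of_mem_rectSpan hφ hi₀ hl₀ (mem hg), map_eq_of_mem_rectSpan hφ hi₀ hl₀ (mem hh)]
      exact congrArg (·, _) hgh
    exact congrArg Prod.fst this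
  · obtain ⟨-, hi, hl⟩ := mem_rectSpan_iff.1 (hbij.mapsTo (mem (one_mem _)))
    obtain ⟨x, hx, hφx⟩ := hbij.surjOn
      (show (b, φ (1, i₀, l₀) |>.2) ∈ rectSpan Y from mem_rectSpan_iff.2 ⟨hb, hi, hl⟩)
    refine ⟨x.1, (mem_rectSpan_iff.1 hx).1, ?_⟩
    rw [map_eq_of_mem_rectSpan hφ hi₀ hl₀ hx] at hφx
    exact congrArg Prod.fst hφx

theorem injOn_leftPart (hφ : IsRectHomOn φ (rectSpan X))
    (hi₀ : i₀ ∈ (fun x => x.2.1) '' X) (hl₀ : l₀ ∈ (fun x => x.2.2) '' X)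
    (hinj : InjOn φ (rectSpan X)) :
    InjOn (leftPart φ l₀) ((fun x => x.2.1) '' X) := by
  have mem {i} (hi : i ∈ (fun x => x.2.1) '' X) : ((1 : G), i, l₀) ∈ rectSpan X :=
    mem_rectSpan_iff.2 ⟨one_mem _, hi, hl₀⟩
  intro i hi i' hi' hii'
  have := hinj (mem hi) (mem hi') <| by
    rw [map_eq_of_mem_rectSpan hφ hi₀ hl₀ (mem hi), map_eq_of_mem_rectSpan hφ hi₀ hl₀ (mem hi')]
    exact congrArg (_, ·, _) hii'
  exact congrArg (·.2.1) this

theorem injOn_rightPart (hφ : IsRectHomOn φ (rectSpan X))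
    (hi₀ : i₀ ∈ (fun x => x.2.1) '' X) (hl₀ : l₀ ∈ (fun x => x.2.2) '' X)
    (hinj : InjOn φ (rectSpan X)) :
    InjOn (rightPart φ i₀) ((fun x => x.2.2) '' X) := by
  have mem {l} (hl : l ∈ (fun x => x.2.2) '' X) : ((1 : G), i₀, l) ∈ rectSpan X :=
    mem_rectSpan_iff.2 ⟨one_mem _, hi₀, hl⟩
  intro l hl l' hl' hll'
  have := hinj (mem hl) (mem hl') <| by
    rw [map_eq_of_mem_rectSpan hφ hi₀ hl₀ (mem hl), map_eq_of_mem_rectSpan hφ hi₀ hl₀ (mem hl')]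
    exact congrArg (_, _, ·) hll'
  exact congrArg (·.2.2) this

theorem isCSHomogeneous_of_isHomogeneousGroup (hG : IsHomogeneousGroup G) :
    IsCSHomogeneous (S := G × I × Λ) rectMul rectInv := by
  classical
  intro X Y φ hbij hφ
  change BijOn φ (rectSpan X) (rectSpan Y) at hbij
  change IsRectHomOn φ (rectSpan X) at hφ
  rcases (X : Set (G × I × Λ)).eq_empty_or_nonempty with hX | ⟨x₀, hx₀⟩
  · exact ⟨id, Function.bijective_id, fun _ _ => rfl,
      fun (x : G × I × Λ) hx => absurd (mem_rectSpan_iff.1 hx).2.1 (by simp [hX])⟩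
  have hi₀ : x₀.2.1 ∈ (fun x => x.2.1) '' (X : Set (G × I × Λ)) := ⟨x₀, hx₀, rfl⟩
  have hl₀ : x₀.2.2 ∈ (fun x => x.2.2) '' (X : Set (G × I × Λ)) := ⟨x₀, hx₀, rfl⟩
  obtain ⟨Θ, hΘ⟩ := hG _ _ ⟨X.image Prod.fst, by rw [Finset.coe_image]⟩
    ⟨Y.image Prod.fst, by rw [Finset.coe_image]⟩
    (Subgroup.mulEquivOfBijOn _ (bijOn_groupPart hφ hi₀ hl₀ hbij)
      fun _ hg _ hh => groupPart_mul hφ hi₀ hl₀ hg hh)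
  obtain ⟨Ψ, hΨ⟩ := (injOn_leftPart hφ hi₀ hl₀ hbij.injOn).exists_perm_eqOn
    (X.finite_toSet.image _)
  obtain ⟨Χ, hΧ⟩ := (injOn_rightPart hφ hi₀ hl₀ hbij.injOn).exists_perm_eqOn
    (X.finite_toSet.image _)
  refine ⟨fun x => (Θ x.1, Ψ x.2.1, Χ x.2.2), (Θ.toEquiv.prodCongr (Ψ.prodCongr Χ)).bijective,
    fun x y => Prod.ext (map_mul Θ x.1 y.1) rfl, fun x hx => ?_⟩
  obtain ⟨hg, hi, hl⟩ := mem_rectSpan_iff.1 hx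
  rw [map_eq_of_mem_rectSpan hφ hi₀ hl₀ hx]
  exact Prod.ext (hΘ ⟨x.1, hg⟩) (Prod.ext (hΨ hi) (hΧ hl))

theorem isHomogeneousGroup_of_isCSHomogeneous_s3 [Nonempty I] [Nonempty Λ]
    (hS : IsCSHomogeneous (S := G × I × Λ) rectMul rectInv) : IsHomogeneousGroup G := by
  classical
  intro A B ⟨TA, hTA⟩ ⟨TB, hTB⟩ e
  obtain ⟨i₀⟩ := ‹Nonempty I›
  obtain ⟨l₀⟩ := ‹Nonempty Λ›
  -- `1` is inserted so that `embed T` meets `G × {(i₀, l₀)}` even when `T = ∅`.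
  let embed (T : Finset G) : Finset (G × I × Λ) := (insert 1 T).image fun g => (g, i₀, l₀)
  have hspan (T : Finset G) : rectSpan (embed T : Set (G × I × Λ)) =
      (Subgroup.closure (T : Set G) : Set G) ×ˢ {(i₀, l₀)} := by
    simp only [embed, Finset.coe_image, Finset.coe_insert, rectSpan_image_insert_one]
  obtain ⟨f, hf, hfmul, hfe⟩ := Subgroup.exists_bijOn_extension e
  obtain ⟨Φ, hΦbij, hΦ, hΦf⟩ := hS (embed TA) (embed TB) (fun x => (f x.1, x.2))
    (by
      change BijOn _ (rectSpan _) (rectSpan _)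
      rw [hspan, hspan, hTA, hTB]
      exact hf.prodMap (bijOn_id _))
    (fun x y hx hy => by
      change x ∈ rectSpan _ at hx
      change y ∈ rectSpan _ at hy
      rw [hspan, hTA] at hx hy
      exact Prod.ext (hfmul _ hx.1 _ hy.1) rfl)
  have hθ := bijOn_groupPart (X := univ) (Y := univ) (i₀ := i₀) (l₀ := l₀)
    (fun x y _ _ => hΦ x y) ⟨(1, i₀, l₀), trivial, rfl⟩ ⟨(1, i₀, l₀), trivial, rfl⟩
    (by rwa [rectSpan_univ, bijOn_univ])
  rw [image_univ_of_surjective Prod.fst_surjective, Subgroup.closure_univ, Subgroup.coe_top,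
    bijOn_univ] at hθ
  refine ⟨MulEquiv.ofBijective (MonoidHom.mk' (groupPart Φ i₀ l₀)
    fun g h => congrArg Prod.fst (hΦ (g, i₀, l₀) (h, i₀, l₀))) hθ, fun a => ?_⟩
  have ha : ((a : G), i₀, l₀) ∈ rectSpan (embed TA : Set (G × I × Λ)) := by
    rw [hspan, hTA]
    exact ⟨a.2, rfl⟩
  exact (congrArg Prod.fst (hΦf _ ha)).trans (hfe a)

end RectangularGroup

theorem rectangular_group_homogeneous_iff_general {G I Λ : Type*} [Group G]
    [Nonempty I] [Nonempty Λ] :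
    IsCSHomogeneous (S := G × I × Λ)
      (fun x y => (x.1 * y.1, x.2.1, y.2.2))
      (fun x => (x.1⁻¹, x.2.1, x.2.2)) ↔
    IsHomogeneousGroup G :=
  ⟨isHomogeneousGroup_of_isCSHomogeneous_s3, isCSHomogeneous_of_isHomogeneousGroup⟩

/-- A rectangular group `S = G × B`, where `G` is a countable group and
`B = I × Λ` is a rectangular band on countable nonempty index sets (so that
`(g,i,λ)(h,j,μ) = (g·h, i, μ)` and the unary operation is `(g,i,λ)' = (g⁻¹,i,λ)`),
is homogeneous as a completely simple semigroup iff `G` is a homogeneous group. -/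
theorem rectangular_group_homogeneous_iff {G I Λ : Type*} [Group G] [Countable G]
    [Countable I] [Countable Λ] [Nonempty I] [Nonempty Λ] :
    IsCSHomogeneous (S := G × I × Λ)
      (fun x y => (x.1 * y.1, x.2.1, y.2.2))
      (fun x => (x.1⁻¹, x.2.1, x.2.2)) ↔
    IsHomogeneousGroup G :=
  rectangular_group_homogeneous_iff_general
end

section
/- Let C be a nonempty countable set of colours. Then: (a) any C-generic complete C-edge-coloured bipartite graph is homogeneous; (b) every complete C-edge-coloured bipartite graph with finite left and right sets embeds colour-preservingly into any C-generic graph (i.e. there are injections of its left set into L and of its right set into R preserving the colouring); and (c) any two C-generic complete C-edge-coloured bipartite graphs are isomorphic, via a pair of colour-preserving bijections of their left sets and of their right sets. -/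
/-- A complete `C`-edge-coloured bipartite graph with left set `L`, right set `R` and
colouring `F` is `C`-generic: `L` and `R` are countably infinite and every finitely
specified colour pattern is realised by a witness on the other side. -/
def IsGenericBipartite {L R C : Type*} (F : L → R → C) : Prop :=
  (Countable L ∧ Infinite L) ∧ (Countable R ∧ Infinite R) ∧
  (∀ (A : Finset L) (α : L → C), ∃ x : R, ∀ a ∈ A, F a x = α a) ∧
  (∀ (B : Finset R) (β : R → C), ∃ z : L, ∀ b ∈ B, F z b = β b)

/-!
A generic graph realises every finite colour pattern by a vertex outside any prescribed finite
set. Hence a finite colour-preserving partial bijection into a generic graph extends forth to any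
further vertex, and, when both graphs are generic, back as well. A Rasiowa–Sikorski sequence of
such extensions meeting every vertex of the (countable) graphs converges to a colour-preserving
embedding, respectively isomorphism; homogeneity is the case of a generic graph and itself.
-/

open Function

variable {C L R L' R' : Type*} {F : L → R → C} {F' : L' → R' → C}

theorem IsGenericBipartite.transpose (hF : IsGenericBipartite F) :
    IsGenericBipartite (swap F) :=
  ⟨hF.2.1, hF.1, hF.2.2.2, hF.2.2.1⟩

theorem IsGenericBipartite.nonempty_colour (hF : IsGenericBipartite F) :
    Nonempty C := by
  obtain ⟨⟨-, _⟩, ⟨-, _⟩, -⟩ := hF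
  exact ⟨F (Classical.arbitrary L) (Classical.arbitrary R)⟩

theorem IsGenericBipartite.exists_fresh_left (hF : IsGenericBipartite F)
    (B : Finset R) (β : R → C) (T : Finset L) : ∃ x ∉ T, ∀ b ∈ B, F x b = β b := by
  classical
  obtain ⟨⟨-, _⟩, ⟨-, _⟩, -, hreal⟩ := hF
  rcases subsingleton_or_nontrivial C with _ | _
  · obtain ⟨x, hx⟩ := Infinite.exists_notMem_finset T
    exact ⟨x, hx, fun _ _ => Subsingleton.elim _ _⟩
  induction T using Finset.induction_on generalizing B β with
  | empty => simpa using hreal B β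
  | insert t T _ ih =>
    -- On a new vertex `r`, ask for a colour that `t` does not have.
    obtain ⟨r, hr⟩ := Infinite.exists_notMem_finset B
    obtain ⟨c, hc⟩ := exists_ne (F t r)
    obtain ⟨x, hxT, hx⟩ := ih (insert r B) (update β r c)
    have hxr : F x r = c := by simpa using hx r (Finset.mem_insert_self r B)
    refine ⟨x, ?_, fun b hb => ?_⟩
    · rw [Finset.mem_insert, not_or]
      exact ⟨fun hxt => hc (hxt ▸ hxr).symm, hxT⟩
    · rw [hx b (Finset.mem_insert_of_mem hb), update_of_ne (ne_of_mem_of_not_mem hb hr)]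

def IsPartialBij {α β : Type*} (U : Set (α × β)) : Prop :=
  ∀ p ∈ U, ∀ q ∈ U, p.1 = q.1 ↔ p.2 = q.2

namespace IsPartialBij

variable {α β : Type*} {U : Set (α × β)}

theorem insert (h : IsPartialBij U) {a : α × β} (h₁ : ∀ p ∈ U, p.1 ≠ a.1)
    (h₂ : ∀ p ∈ U, p.2 ≠ a.2) : IsPartialBij (insert a U) := by
  rintro p (rfl | hp) q (rfl | hq)
  · exact iff_of_true rfl rfl
  · exact iff_of_false (h₁ q hq).symm (h₂ q hq).symm
  · exact iff_of_false (h₁ p hp) (h₂ p hp)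
  · exact h p hp q hq

theorem image_swap (h : IsPartialBij U) : IsPartialBij (Prod.swap '' U) := by
  rintro _ ⟨p, hp, rfl⟩ _ ⟨q, hq, rfl⟩
  exact (h p hp q hq).symm

theorem image_graph {A : Set α} {f : α → β} (hf : Set.InjOn f A) :
    IsPartialBij ((fun a => (a, f a)) '' A) := by
  rintro _ ⟨a, ha, rfl⟩ _ ⟨b, hb, rfl⟩
  exact ⟨congrArg f, fun h => hf ha hb h⟩

theorem exists_injective (h : IsPartialBij U) (hdom : ∀ a, ∃ b, (a, b) ∈ U) :
    ∃ f : α → β, Injective f ∧ ∀ p ∈ U, f p.1 = p.2 := by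
  choose f hf using hdom
  exact ⟨f, fun a a' haa' => (h _ (hf a) _ (hf a')).2 haa', fun p hp => (h _ (hf p.1) _ hp).1 rfl⟩

end IsPartialBij

namespace ColouredBipartite

structure IsPartialIso (F : L → R → C) (F' : L' → R' → C) (s : Finset (L × L'))
    (t : Finset (R × R')) : Prop where
  bij_left : IsPartialBij (s : Set (L × L'))
  bij_right : IsPartialBij (t : Set (R × R'))
  map_colour : ∀ p ∈ s, ∀ q ∈ t, F' p.2 q.2 = F p.1 q.1

namespace IsPartialIso

variable {s : Finset (L × L')} {t : Finset (R × R')}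

theorem empty : IsPartialIso F F' ∅ ∅ :=
  ⟨by simp [IsPartialBij], by simp [IsPartialBij], by simp⟩

theorem of_injOn [DecidableEq L] [DecidableEq L'] [DecidableEq R] [DecidableEq R']
    {A : Finset L} {B : Finset R} {α : L → L'} {β : R → R'} (hα : Set.InjOn α A)
    (hβ : Set.InjOn β B) (hcol : ∀ a ∈ A, ∀ b ∈ B, F' (α a) (β b) = F a b) :
    IsPartialIso F F' (A.image fun a => (a, α a)) (B.image fun b => (b, β b)) where
  bij_left := by rw [Finset.coe_image]; exact .image_graph hα
  bij_right := by rw [Finset.coe_image]; exact .image_graph hβ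
  map_colour := by simpa only [Finset.forall_mem_image] using hcol

theorem symm [DecidableEq L] [DecidableEq L'] [DecidableEq R] [DecidableEq R']
    (h : IsPartialIso F F' s t) :
    IsPartialIso F' F (s.image Prod.swap) (t.image Prod.swap) where
  bij_left := by rw [Finset.coe_image]; exact h.bij_left.image_swap
  bij_right := by rw [Finset.coe_image]; exact h.bij_right.image_swap
  map_colour := by
    simp only [Finset.forall_mem_image, Prod.fst_swap, Prod.snd_swap]
    exact fun p hp q hq => (h.map_colour p hp q hq).symm

theorem transpose (h : IsPartialIso F F' s t) : IsPartialIso (swap F) (swap F') t s :=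
  ⟨h.bij_right, h.bij_left, fun q hq p hp => h.map_colour p hp q hq⟩

theorem forth_left [DecidableEq L] [DecidableEq L'] (hF' : IsGenericBipartite F')
    (h : IsPartialIso F F' s t) (x : L) : ∃ x', IsPartialIso F F' (insert (x, x') s) t := by
  classical
  by_cases hx : ∃ x', (x, x') ∈ s
  · obtain ⟨x', hx'⟩ := hx
    exact ⟨x', by rwa [Finset.insert_eq_of_mem hx']⟩
  simp only [not_exists] at hx
  have := hF'.nonempty_colour
  have hinj : Injective fun q : t => q.1.2 := fun q q' hqq' =>
    Subtype.ext (Prod.ext ((h.bij_right _ q.2 _ q'.2).2 hqq') hqq')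
  -- `x'` must see each matched `q.2` in the colour in which `x` sees `q.1`.
  let β : R' → C := extend (fun q : t => q.1.2) (fun q => F x q.1.1) fun _ => Classical.arbitrary C
  obtain ⟨x', hx's, hx'⟩ := hF'.exists_fresh_left (t.image Prod.snd) β (s.image Prod.snd)
  refine ⟨x', ⟨?_, h.bij_right, ?_⟩⟩
  · rw [Finset.coe_insert]
    refine h.bij_left.insert ?_ fun p hp hpx => hx's (Finset.mem_image.2 ⟨p, hp, hpx⟩)
    rintro ⟨a, a'⟩ hp rfl
    exact hx a' hp
  · rw [Finset.forall_mem_insert]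
    refine ⟨fun q hq => ?_, h.map_colour⟩
    rw [hx' q.2 (Finset.mem_image_of_mem _ hq)]
    exact hinj.extend_apply _ _ ⟨q, hq⟩

theorem back_left [DecidableEq L] [DecidableEq L'] [DecidableEq R] [DecidableEq R']
    (hF : IsGenericBipartite F) (h : IsPartialIso F F' s t) (x' : L') :
    ∃ x, IsPartialIso F F' (insert (x, x') s) t := by
  obtain ⟨x, hx⟩ := h.symm.forth_left hF x'
  refine ⟨x, ?_⟩
  simpa [Finset.image_insert, Finset.image_image] using hx.symm

theorem forth_right [DecidableEq R] [DecidableEq R'] (hF' : IsGenericBipartite F')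
    (h : IsPartialIso F F' s t) (y : R) : ∃ y', IsPartialIso F F' s (insert (y, y') t) := by
  obtain ⟨y', hy⟩ := h.transpose.forth_left hF'.transpose y
  exact ⟨y', hy.transpose⟩

theorem back_right [DecidableEq L] [DecidableEq L'] [DecidableEq R] [DecidableEq R']
    (hF : IsGenericBipartite F) (h : IsPartialIso F F' s t) (y' : R') :
    ∃ y, IsPartialIso F F' s (insert (y, y') t) := by
  obtain ⟨y, hy⟩ := h.transpose.back_left hF.transpose y'
  exact ⟨y, hy.transpose⟩

end IsPartialIso

structure PartialIso (F : L → R → C) (F' : L' → R' → C) where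
  left : Finset (L × L')
  right : Finset (R × R')
  isPartialIso : IsPartialIso F F' left right

namespace PartialIso

instance : Preorder (PartialIso F F') := Preorder.lift fun p => (p.left, p.right)

def DefinedAt : L ⊕ R → Set (PartialIso F F')
  | .inl x => {p | ∃ x', (x, x') ∈ p.left}
  | .inr y => {p | ∃ y', (y, y') ∈ p.right}

def Hits : L' ⊕ R' → Set (PartialIso F F')
  | .inl x' => {p | ∃ x, (x, x') ∈ p.left}
  | .inr y' => {p | ∃ y, (y, y') ∈ p.right}

theorem isCofinal_definedAt (hF' : IsGenericBipartite F') (i : L ⊕ R) :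
    IsCofinal (DefinedAt (F := F) (F' := F') i) := by
  classical
  intro p
  cases i with
  | inl x =>
    obtain ⟨x', h⟩ := p.isPartialIso.forth_left hF' x
    exact ⟨⟨_, _, h⟩, ⟨x', Finset.mem_insert_self _ _⟩, Finset.subset_insert _ _, subset_rfl⟩
  | inr y =>
    obtain ⟨y', h⟩ := p.isPartialIso.forth_right hF' y
    exact ⟨⟨_, _, h⟩, ⟨y', Finset.mem_insert_self _ _⟩, subset_rfl, Finset.subset_insert _ _⟩

theorem isCofinal_hits (hF : IsGenericBipartite F) (i : L' ⊕ R') :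
    IsCofinal (Hits (F := F) (F' := F') i) := by
  classical
  intro p
  cases i with
  | inl x' =>
    obtain ⟨x, h⟩ := p.isPartialIso.back_left hF x'
    exact ⟨⟨_, _, h⟩, ⟨x, Finset.mem_insert_self _ _⟩, Finset.subset_insert _ _, subset_rfl⟩
  | inr y' =>
    obtain ⟨y, h⟩ := p.isPartialIso.back_right hF y'
    exact ⟨⟨_, _, h⟩, ⟨y, Finset.mem_insert_self _ _⟩, subset_rfl, Finset.subset_insert _ _⟩

theorem exists_injective_of_ideal (I : Order.Ideal (PartialIso F F'))
    (hdom : ∀ i, ∃ p ∈ DefinedAt i, p ∈ I) :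
    ∃ (e : L → L') (f : R → R'), Injective e ∧ Injective f ∧
      (∀ p ∈ I, (∀ q ∈ p.left, e q.1 = q.2) ∧ ∀ q ∈ p.right, f q.1 = q.2) ∧
      ∀ x y, F' (e x) (f y) = F x y := by
  have hleft : IsPartialBij {q | ∃ p ∈ I, q ∈ p.left} := by
    rintro q ⟨p, hp, hq⟩ q' ⟨p', hp', hq'⟩
    obtain ⟨m, -, hpm, hp'm⟩ := I.directed p hp p' hp'
    exact m.isPartialIso.bij_left q (hpm.1 hq) q' (hp'm.1 hq')
  have hright : IsPartialBij {q | ∃ p ∈ I, q ∈ p.right} := by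
    rintro q ⟨p, hp, hq⟩ q' ⟨p', hp', hq'⟩
    obtain ⟨m, -, hpm, hp'm⟩ := I.directed p hp p' hp'
    exact m.isPartialIso.bij_right q (hpm.2 hq) q' (hp'm.2 hq')
  obtain ⟨e, he, he_ext⟩ := hleft.exists_injective fun x =>
    let ⟨p, ⟨x', hx'⟩, hp⟩ := hdom (.inl x); ⟨x', p, hp, hx'⟩
  obtain ⟨f, hf, hf_ext⟩ := hright.exists_injective fun y =>
    let ⟨p, ⟨y', hy'⟩, hp⟩ := hdom (.inr y); ⟨y', p, hp, hy'⟩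
  refine ⟨e, f, he, hf, fun p hp => ⟨fun q hq => he_ext q ⟨p, hp, hq⟩,
    fun q hq => hf_ext q ⟨p, hp, hq⟩⟩, fun x y => ?_⟩
  obtain ⟨p, ⟨x', hx'⟩, hp⟩ := hdom (.inl x)
  obtain ⟨q, ⟨y', hy'⟩, hq⟩ := hdom (.inr y)
  obtain ⟨m, -, hpm, hqm⟩ := I.directed p hp q hq
  rw [he_ext _ ⟨p, hp, hx'⟩, hf_ext _ ⟨q, hq, hy'⟩]
  exact m.isPartialIso.map_colour _ (hpm.1 hx') _ (hqm.2 hy')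

end PartialIso

end ColouredBipartite

open ColouredBipartite

theorem IsGenericBipartite.exists_embedding (hF : IsGenericBipartite F)
    {L₀ R₀ : Type*} [Countable L₀] [Countable R₀] (F₀ : L₀ → R₀ → C) :
    ∃ (el : L₀ → L) (er : R₀ → R), Injective el ∧ Injective er ∧
      ∀ a b, F (el a) (er b) = F₀ a b := by
  cases nonempty_encodable (L₀ ⊕ R₀)
  let D : L₀ ⊕ R₀ → Order.Cofinal (PartialIso F₀ F) := fun i =>
    ⟨PartialIso.DefinedAt i, PartialIso.isCofinal_definedAt hF i⟩
  obtain ⟨el, er, hel, her, -, hcol⟩ := PartialIso.exists_injective_of_ideal _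
    (Order.cofinal_meets_idealOfCofinals (⟨∅, ∅, .empty⟩ : PartialIso F₀ F) D)
  exact ⟨el, er, hel, her, hcol⟩

theorem IsGenericBipartite.exists_equiv_extending (hF : IsGenericBipartite F)
    (hF' : IsGenericBipartite F') {s : Finset (L × L')} {t : Finset (R × R')}
    (h : IsPartialIso F F' s t) :
    ∃ (e : L ≃ L') (f : R ≃ R'), (∀ p ∈ s, e p.1 = p.2) ∧ (∀ q ∈ t, f q.1 = q.2) ∧
      ∀ x y, F' (e x) (f y) = F x y := by
  have : Countable L := hF.1.1
  have : Countable R := hF.2.1.1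
  have : Countable L' := hF'.1.1
  have : Countable R' := hF'.2.1.1
  cases nonempty_encodable ((L ⊕ R) ⊕ (L' ⊕ R'))
  let p₀ : PartialIso F F' := ⟨s, t, h⟩
  let D : (L ⊕ R) ⊕ (L' ⊕ R') → Order.Cofinal (PartialIso F F') := Sum.elim
    (fun i => ⟨PartialIso.DefinedAt i, PartialIso.isCofinal_definedAt hF' i⟩)
    (fun i' => ⟨PartialIso.Hits i', PartialIso.isCofinal_hits hF i'⟩)
  have hmeets := Order.cofinal_meets_idealOfCofinals p₀ D
  obtain ⟨e, f, he, hf, hext, hcol⟩ :=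
    PartialIso.exists_injective_of_ideal _ fun i => hmeets (.inl i)
  have he_surj : Surjective e := fun x' =>
    let ⟨p, ⟨x, hx⟩, hp⟩ := hmeets (.inr (.inl x')); ⟨x, (hext p hp).1 _ hx⟩
  have hf_surj : Surjective f := fun y' =>
    let ⟨p, ⟨y, hy⟩, hp⟩ := hmeets (.inr (.inr y')); ⟨y, (hext p hp).2 _ hy⟩
  have hp₀ := hext p₀ (Order.mem_idealOfCofinals p₀ D)
  exact ⟨.ofBijective e ⟨he, he_surj⟩, .ofBijective f ⟨hf, hf_surj⟩, hp₀.1, hp₀.2, hcol⟩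

theorem generic_bipartite_properties_general {C : Type} :
    (∀ (L R : Type) (F : L → R → C), IsGenericBipartite F → IsHomogeneousBipartite F) ∧
    (∀ (L R : Type) (F : L → R → C), IsGenericBipartite F →
      ∀ (L₀ R₀ : Type) [Finite L₀] [Finite R₀] [Nonempty L₀] [Nonempty R₀]
        (F₀ : L₀ → R₀ → C),
        ∃ (el : L₀ → L) (er : R₀ → R),
          Function.Injective el ∧ Function.Injective er ∧
          ∀ (a : L₀) (b : R₀), F (el a) (er b) = F₀ a b) ∧
    (∀ (L R L' R' : Type) (F : L → R → C) (F' : L' → R' → C),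
      IsGenericBipartite F → IsGenericBipartite F' →
      ∃ (e : L ≃ L') (f : R ≃ R'), ∀ (x : L) (y : R), F' (e x) (f y) = F x y) := by
  classical
  refine ⟨fun L R F hF A B α β hα hβ hcol => ?_,
    fun L R F hF L₀ R₀ _ _ _ _ F₀ => hF.exists_embedding F₀,
    fun L R L' R' F F' hF hF' => ?_⟩
  · obtain ⟨e, f, he, hf, hef⟩ := hF.exists_equiv_extending hF (.of_injOn hα hβ hcol)
    exact ⟨e, f, fun a ha => he _ (Finset.mem_image_of_mem _ ha),
      fun b hb => hf _ (Finset.mem_image_of_mem _ hb), hef⟩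
  · obtain ⟨e, f, -, -, hef⟩ := hF.exists_equiv_extending hF' .empty
    exact ⟨e, f, hef⟩

/-- For a nonempty countable colour set `C`:
(a) any `C`-generic complete `C`-edge-coloured bipartite graph is homogeneous;
(b) every complete `C`-edge-coloured bipartite graph with finite (nonempty) left and right
sets embeds colour-preservingly into any `C`-generic graph;
(c) any two `C`-generic complete `C`-edge-coloured bipartite graphs are isomorphic via a
pair of colour-preserving bijections of left sets and of right sets. -/
theorem generic_bipartite_properties {C : Type} [Countable C] [Nonempty C] :
    (∀ (L R : Type) (F : L → R → C), IsGenericBipartite F → IsHomogeneousBipartite F) ∧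
    (∀ (L R : Type) (F : L → R → C), IsGenericBipartite F →
      ∀ (L₀ R₀ : Type) [Finite L₀] [Finite R₀] [Nonempty L₀] [Nonempty R₀]
        (F₀ : L₀ → R₀ → C),
        ∃ (el : L₀ → L) (er : R₀ → R),
          Function.Injective el ∧ Function.Injective er ∧
          ∀ (a : L₀) (b : R₀), F (el a) (er b) = F₀ a b) ∧
    (∀ (L R L' R' : Type) (F : L → R → C) (F' : L' → R' → C),
      IsGenericBipartite F → IsGenericBipartite F' →
      ∃ (e : L ≃ L') (f : R ≃ R'), ∀ (x : L) (y : R), F' (e x) (f y) = F x y) :=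
  generic_bipartite_properties_general
end

section
/- Let S = M[G;I,Λ;P] and T = M[H;J,M;Q] be normalised Rees matrix semigroups. (a) If θ : G → H is a group homomorphism, ψ_I : I → J and ψ_Λ : Λ → M are maps, and u : I → H, v : Λ → H are families satisfying θ(P(λ,i)) = v_λ · Q(ψ_Λ(λ), ψ_I(i)) · u_i for all i ∈ I, λ ∈ Λ, then the map φ = [θ,ψ,u,v] : S → T defined by φ(i,g,λ) = (ψ_I(i), u_i·θ(g)·v_λ, ψ_Λ(λ)) is a semigroup homomorphism. (b) Conversely, every semigroup homomorphism from S to T is of this form. (c) Such a φ is injective if and only if θ, ψ_I and ψ_Λ are all injective, and surjective if and only if θ, ψ_I and ψ_Λ are all surjective. -/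
/-!
In a normalised Rees matrix semigroup `(i, g, λ) = (i, 1, 1)(1, g, 1)(1, 1, λ)`, so a
homomorphism `φ` is determined by its values on the `(i, 1, 1)`, on the maximal subgroup
`H₁₁ = {(1, g, 1)} ≅ G` and on the `(1, 1, λ)`. Inside `T` the product of `φ(1, g, 1)` and
`φ(1, h, 1)` is a sandwich product `a q b` with a fixed entry `q` of `Q`, so right
multiplication by `q` turns `g ↦ φ(1, g, 1)` into a group homomorphism `θ`.

For (c), the compatibility condition shows that `u i` is determined by `ψ_I i` up to a factor
in `θ(G)` (dually for `v`), so `[θ, ψ, u, v]` identifies two triples exactly when it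
identifies their coordinates.
-/

section ReesHom

variable {G H I Λ J M : Type*} [Group G] [Group H]

def ReesCompatible (P : Λ → I → G) (Q : M → J → H) (θ : G →* H) (ψI : I → J) (ψΛ : Λ → M)
    (u : I → H) (v : Λ → H) : Prop :=
  ∀ (i : I) (l : Λ), θ (P l i) = v l * Q (ψΛ l) (ψI i) * u i

@[simp]
lemma reesMul_mk (P : Λ → I → G) (i : I) (g : G) (l : Λ) (j : I) (h : G) (m : Λ) :
    reesMul P (i, g, l) (j, h, m) = (i, g * P l j * h, m) := rfl

@[simp]
lemma reesMap_mk (θ : G →* H) (ψI : I → J) (ψΛ : Λ → M) (u : I → H) (v : Λ → H)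
    (i : I) (g : G) (l : Λ) :
    reesMap θ ψI ψΛ u v (i, g, l) = (ψI i, u i * θ g * v l, ψΛ l) := rfl

def sandwichHom (f : G → H) (q : H) (hf : ∀ a b, f (a * b) = f a * q * f b) : G →* H :=
  MonoidHom.mk' (fun g => f g * q) fun a b => by rw [hf]; group

@[simp]
lemma sandwichHom_apply (f : G → H) (q : H) (hf : ∀ a b, f (a * b) = f a * q * f b) (g : G) :
    sandwichHom f q hf g = f g * q := rfl

variable {P : Λ → I → G} {Q : M → J → H}

section Compatible

variable {θ : G →* H} {ψI : I → J} {ψΛ : Λ → M} {u : I → H} {v : Λ → H}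

lemma ReesCompatible.reesMap_reesMul (hc : ReesCompatible P Q θ ψI ψΛ u v)
    (x y : I × G × Λ) :
    reesMap θ ψI ψΛ u v (reesMul P x y) =
      reesMul Q (reesMap θ ψI ψΛ u v x) (reesMap θ ψI ψΛ u v y) := by
  obtain ⟨i, g, l⟩ := x
  obtain ⟨j, h, m⟩ := y
  simp only [reesMul_mk, reesMap_mk, map_mul, hc j l, Prod.mk.injEq, true_and, and_true]
  group

lemma ReesCompatible.u_eq_of_ψI_eq (hc : ReesCompatible P Q θ ψI ψΛ u v) {a b : I}
    (hab : ψI a = ψI b) (l : Λ) : u b = u a * θ ((P l a)⁻¹ * P l b) := by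
  rw [map_mul, map_inv, hc a l, hc b l, hab]
  group

lemma ReesCompatible.v_eq_of_ψΛ_eq (hc : ReesCompatible P Q θ ψI ψΛ u v) {a b : Λ}
    (hab : ψΛ a = ψΛ b) (i : I) : v b = θ (P b i * (P a i)⁻¹) * v a := by
  rw [map_mul, map_inv, hc i a, hc i b, hab]
  group

lemma ReesCompatible.reesMap_mk_of_ψI_eq (hc : ReesCompatible P Q θ ψI ψΛ u v) {a b : I}
    (hab : ψI a = ψI b) (g : G) (l : Λ) :
    reesMap θ ψI ψΛ u v (b, g, l) = reesMap θ ψI ψΛ u v (a, (P l a)⁻¹ * P l b * g, l) := by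
  simp only [reesMap_mk, hc.u_eq_of_ψI_eq hab l, map_mul, hab, mul_assoc]

lemma ReesCompatible.reesMap_mk_of_ψΛ_eq (hc : ReesCompatible P Q θ ψI ψΛ u v) {a b : Λ}
    (hab : ψΛ a = ψΛ b) (i : I) (g : G) :
    reesMap θ ψI ψΛ u v (i, g, b) = reesMap θ ψI ψΛ u v (i, g * (P b i * (P a i)⁻¹), a) := by
  simp only [reesMap_mk, hc.v_eq_of_ψΛ_eq hab i, map_mul, hab, mul_assoc]

lemma ReesCompatible.reesMap_injective_iff [Nonempty I] [Nonempty Λ]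
    (hc : ReesCompatible P Q θ ψI ψΛ u v) :
    Function.Injective (reesMap θ ψI ψΛ u v) ↔
      Function.Injective θ ∧ Function.Injective ψI ∧ Function.Injective ψΛ := by
  obtain ⟨i₀⟩ := ‹Nonempty I›
  obtain ⟨l₀⟩ := ‹Nonempty Λ›
  constructor
  · intro hinj
    refine ⟨fun g h hgh => ?_, fun a b hab => ?_, fun a b hab => ?_⟩
    · simpa using @hinj (i₀, g, l₀) (i₀, h, l₀) (by simp [hgh])
    · have := hinj (hc.reesMap_mk_of_ψI_eq hab 1 l₀)
      exact (congrArg Prod.fst this).symm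
    · have := hinj (hc.reesMap_mk_of_ψΛ_eq hab i₀ 1)
      exact (congrArg (·.2.2) this).symm
  · rintro ⟨hθ, hI, hΛ⟩ ⟨a, g, l⟩ ⟨b, h, m⟩ hxy
    simp only [reesMap_mk, Prod.mk.injEq] at hxy
    obtain ⟨hab, hgh, hlm⟩ := hxy
    obtain rfl := hI hab
    obtain rfl := hΛ hlm
    rw [hθ (mul_left_cancel (mul_right_cancel hgh))]

lemma ReesCompatible.reesMap_surjective_iff [Nonempty I] [Nonempty Λ]
    (hc : ReesCompatible P Q θ ψI ψΛ u v) :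
    Function.Surjective (reesMap θ ψI ψΛ u v) ↔
      Function.Surjective θ ∧ Function.Surjective ψI ∧ Function.Surjective ψΛ := by
  obtain ⟨i₀⟩ := ‹Nonempty I›
  obtain ⟨l₀⟩ := ‹Nonempty Λ›
  constructor
  · intro hs
    refine ⟨fun t => ?_, fun j => ?_, fun m => ?_⟩
    · obtain ⟨⟨i, g, l⟩, hx⟩ := hs (ψI i₀, u i₀ * t * v l₀, ψΛ l₀)
      have hi : ψI i₀ = ψI i := (congrArg Prod.fst hx).symm
      have hl : ψΛ l₀ = ψΛ l := (congrArg (·.2.2) hx).symm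
      rw [hc.reesMap_mk_of_ψI_eq hi, hc.reesMap_mk_of_ψΛ_eq hl, reesMap_mk] at hx
      exact ⟨_, mul_left_cancel (mul_right_cancel (congrArg (·.2.1) hx))⟩
    · obtain ⟨x, hx⟩ := hs (j, 1, ψΛ l₀)
      exact ⟨x.1, congrArg Prod.fst hx⟩
    · obtain ⟨x, hx⟩ := hs (ψI i₀, 1, m)
      exact ⟨x.2.2, congrArg (·.2.2) hx⟩
  · rintro ⟨hθ, hI, hΛ⟩ ⟨j, t, m⟩
    obtain ⟨i, rfl⟩ := hI j
    obtain ⟨l, rfl⟩ := hΛ m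
    obtain ⟨g, hg⟩ := hθ ((u i)⁻¹ * t * (v l)⁻¹)
    exact ⟨(i, g, l), by simp [hg, mul_assoc]⟩

end Compatible

section Hom

variable {φ : I × G × Λ → J × H × M}
  (hφ : ∀ x y : I × G × Λ, φ (reesMul P x y) = reesMul Q (φ x) (φ y))
  (i₀ : I) {l₀ : Λ} (hP : ∀ i : I, P l₀ i = 1)
include hφ i₀ hP

lemma fst_map_mk_eq (g : G) (l : Λ) : (φ (i₀, g, l)).1 = (φ (i₀, 1, l₀)).1 := by
  have h : reesMul P (i₀, 1, l₀) (i₀, g, l) = (i₀, g, l) := by simp [hP]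
  rw [← h, hφ]
  rfl

lemma snd_snd_map_mk_eq (i : I) (g : G) : (φ (i, g, l₀)).2.2 = (φ (i₀, 1, l₀)).2.2 := by
  have h : reesMul P (i, g, l₀) (i₀, 1, l₀) = (i, g, l₀) := by simp [hP]
  rw [← h, hφ]
  rfl

lemma map_mk_eq_reesMul (i : I) (g : G) (l : Λ) :
    φ (i, g, l) = reesMul Q (reesMul Q (φ (i, 1, l₀)) (φ (i₀, g, l₀))) (φ (i₀, 1, l)) := by
  have h : reesMul P (reesMul P (i, 1, l₀) (i₀, g, l₀)) (i₀, 1, l) = (i, g, l) := by simp [hP]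
  rw [← h, hφ, hφ]

theorem exists_reesMap_eq :
    ∃ (θ : G →* H) (ψI : I → J) (ψΛ : Λ → M) (u : I → H) (v : Λ → H),
      ReesCompatible P Q θ ψI ψΛ u v ∧ φ = reesMap θ ψI ψΛ u v := by
  set q := Q (φ (i₀, 1, l₀)).2.2 (φ (i₀, 1, l₀)).1
  have hmul (g h : G) :
      (φ (i₀, g * h, l₀)).2.1 = (φ (i₀, g, l₀)).2.1 * q * (φ (i₀, h, l₀)).2.1 := by
    have e : reesMul P (i₀, g, l₀) (i₀, h, l₀) = (i₀, g * h, l₀) := by simp [hP]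
    rw [← e, hφ]
    simp only [reesMul, snd_snd_map_mk_eq hφ i₀ hP, fst_map_mk_eq hφ i₀ hP, q]
  refine ⟨sandwichHom (fun g => (φ (i₀, g, l₀)).2.1) q hmul, fun i => (φ (i, 1, l₀)).1,
    fun l => (φ (i₀, 1, l)).2.2, fun i => (φ (i, 1, l₀)).2.1 * q, fun l => (φ (i₀, 1, l)).2.1,
    fun i l => ?_, ?_⟩
  · have e : reesMul P (i₀, 1, l) (i, 1, l₀) = (i₀, P l i, l₀) := by simp
    simp only [sandwichHom_apply, ← e, hφ]
    simp [reesMul, mul_assoc]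
  · funext ⟨i, g, l⟩
    rw [map_mk_eq_reesMul hφ i₀ hP]
    simp only [reesMul, reesMap_mk, sandwichHom_apply, snd_snd_map_mk_eq hφ i₀ hP,
      fst_map_mk_eq hφ i₀ hP, mul_assoc, q]

end Hom

end ReesHom

theorem rees_hom_form_general {G H I Λ J M : Type*} [Group G] [Group H]
    (P : Λ → I → G) (Q : M → J → H)
    (iI : I) (lL : Λ) (hP1 : ∀ j : I, P lL j = 1) :
    (∀ (θ : G →* H) (ψI : I → J) (ψΛ : Λ → M) (u : I → H) (v : Λ → H),
      (∀ (i : I) (l : Λ), θ (P l i) = v l * Q (ψΛ l) (ψI i) * u i) →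
      ∀ x y : I × G × Λ,
        reesMap θ ψI ψΛ u v (reesMul P x y) =
          reesMul Q (reesMap θ ψI ψΛ u v x) (reesMap θ ψI ψΛ u v y)) ∧
    (∀ φ : I × G × Λ → J × H × M,
      (∀ x y : I × G × Λ, φ (reesMul P x y) = reesMul Q (φ x) (φ y)) →
      ∃ (θ : G →* H) (ψI : I → J) (ψΛ : Λ → M) (u : I → H) (v : Λ → H),
        (∀ (i : I) (l : Λ), θ (P l i) = v l * Q (ψΛ l) (ψI i) * u i) ∧
        φ = reesMap θ ψI ψΛ u v) ∧
    (∀ (θ : G →* H) (ψI : I → J) (ψΛ : Λ → M) (u : I → H) (v : Λ → H),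
      (∀ (i : I) (l : Λ), θ (P l i) = v l * Q (ψΛ l) (ψI i) * u i) →
      (Function.Injective (reesMap θ ψI ψΛ u v) ↔
        Function.Injective θ ∧ Function.Injective ψI ∧ Function.Injective ψΛ) ∧
      (Function.Surjective (reesMap θ ψI ψΛ u v) ↔
        Function.Surjective θ ∧ Function.Surjective ψI ∧ Function.Surjective ψΛ)) := by
  have : Nonempty I := ⟨iI⟩
  have : Nonempty Λ := ⟨lL⟩
  exact ⟨fun θ ψI ψΛ u v hc => ReesCompatible.reesMap_reesMul hc,
    fun φ hφ => exists_reesMap_eq hφ iI hP1,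
    fun θ ψI ψΛ u v hc =>
      ⟨ReesCompatible.reesMap_injective_iff hc, ReesCompatible.reesMap_surjective_iff hc⟩⟩

/-- For normalised Rees matrix semigroups `S = M[G;I,Λ;P]` and
`T = M[H;J,M;Q]`: (a) any `[θ,ψ,u,v]` satisfying the compatibility condition
`θ(P(λ,i)) = v_λ · Q(ψ_Λ(λ), ψ_I(i)) · u_i` is a semigroup homomorphism `S → T`;
(b) every semigroup homomorphism `S → T` is of this form; (c) such a map is injective
(resp. surjective) iff `θ`, `ψ_I` and `ψ_Λ` are all injective (resp. surjective). -/
theorem rees_hom_form {G H I Λ J M : Type*} [Group G] [Group H]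
    (P : Λ → I → G) (Q : M → J → H)
    (iI : I) (lL : Λ) (hP1 : ∀ j : I, P lL j = 1) (hP2 : ∀ m : Λ, P m iI = 1)
    (jJ : J) (mM : M) (hQ1 : ∀ j : J, Q mM j = 1) (hQ2 : ∀ m : M, Q m jJ = 1) :
    (∀ (θ : G →* H) (ψI : I → J) (ψΛ : Λ → M) (u : I → H) (v : Λ → H),
      (∀ (i : I) (l : Λ), θ (P l i) = v l * Q (ψΛ l) (ψI i) * u i) →
      ∀ x y : I × G × Λ,
        reesMap θ ψI ψΛ u v (reesMul P x y) =
          reesMul Q (reesMap θ ψI ψΛ u v x) (reesMap θ ψI ψΛ u v y)) ∧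
    (∀ φ : I × G × Λ → J × H × M,
      (∀ x y : I × G × Λ, φ (reesMul P x y) = reesMul Q (φ x) (φ y)) →
      ∃ (θ : G →* H) (ψI : I → J) (ψΛ : Λ → M) (u : I → H) (v : Λ → H),
        (∀ (i : I) (l : Λ), θ (P l i) = v l * Q (ψΛ l) (ψI i) * u i) ∧
        φ = reesMap θ ψI ψΛ u v) ∧
    (∀ (θ : G →* H) (ψI : I → J) (ψΛ : Λ → M) (u : I → H) (v : Λ → H),
      (∀ (i : I) (l : Λ), θ (P l i) = v l * Q (ψΛ l) (ψI i) * u i) →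
      (Function.Injective (reesMap θ ψI ψΛ u v) ↔
        Function.Injective θ ∧ Function.Injective ψI ∧ Function.Injective ψΛ) ∧
      (Function.Surjective (reesMap θ ψI ψΛ u v) ↔
        Function.Surjective θ ∧ Function.Surjective ψI ∧ Function.Surjective ψΛ)) :=
  rees_hom_form_general P Q iI lL hP1
end

section
/- Let S = M[G;I,Λ;P] and T = M[H;J,M;Q] be normalised Rees matrix semigroups and let φ : S → T be a semigroup homomorphism. Then there exist a group homomorphism θ : G → H, maps ψ_I : I → J and ψ_Λ : Λ → M, and families u : I → H, v : Λ → H with u_i ∈ ⟨H^Q⟩ and v_λ ∈ ⟨H^Q⟩ for all i ∈ I, λ ∈ Λ, such that φ = [θ,ψ,u,v], θ maps ⟨G^P⟩ into ⟨H^Q⟩, and the restriction of φ to ⟨E(S)⟩ = I × ⟨G^P⟩ × Λ is a semigroup homomorphism into ⟨E(T)⟩ = J × ⟨H^Q⟩ × M. -/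
/-! Normalisation makes `(iI, 1, lL)` an idempotent whose `H`-class `{iI} × G × {lL}` is a copy
of `G`, and every element factors as `(i, 1, lL) (iI, g, lL) (iI, 1, λ)`. A homomorphism `φ`
is therefore determined by its values on that `H`-class, which it maps homomorphically into
an `H`-class of `T` (giving `θ` after a translation by the sandwich entry `q₀` there), and on
the idempotents `(i, 1, lL)` and `(iI, 1, λ)`. Idempotents of `T` have the form
`(j, Q(μ, j)⁻¹, μ)`, so these contribute factors `u_i`, `v_λ` that are products of entries
of `Q`. Applying `φ` to `(iI, 1, λ) (i, 1, lL) = (iI, P(λ, i), lL)` gives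
`θ (P(λ, i)) = v_λ Q(ψλ, ψi) u_i`, hence `θ ⟨G^P⟩ ⊆ ⟨H^Q⟩`. -/

section ReesHom

variable {G H I Λ J M : Type*} [Group G] [Group H]

def IsReesHom (P : Λ → I → G) (Q : M → J → H) (φ : I × G × Λ → J × H × M) : Prop :=
  ∀ x y, φ (reesMul P x y) = reesMul Q (φ x) (φ y)

@[simp]
lemma reesMul_fst (P : Λ → I → G) (x y : I × G × Λ) : (reesMul P x y).1 = x.1 := rfl

@[simp]
lemma reesMul_snd_fst (P : Λ → I → G) (x y : I × G × Λ) :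
    (reesMul P x y).2.1 = x.2.1 * P x.2.2 y.1 * y.2.1 := rfl

@[simp]
lemma reesMul_snd_snd (P : Λ → I → G) (x y : I × G × Λ) : (reesMul P x y).2.2 = y.2.2 := rfl

lemma reesMul_self_eq_self_iff {P : Λ → I → G} {x : I × G × Λ} :
    reesMul P x x = x ↔ x.2.1 = (P x.2.2 x.1)⁻¹ := by
  simp [Prod.ext_iff, mul_eq_one_iff_eq_inv]

lemma exists_reesMul_eq_of_fst_eq (P : Λ → I → G) {x y : I × G × Λ} (h : y.1 = x.1) :
    ∃ z, reesMul P y z = x :=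
  ⟨(x.1, (y.2.1 * P y.2.2 x.1)⁻¹ * x.2.1, x.2.2), by ext <;> simp [h, mul_assoc]⟩

lemma exists_reesMul_eq_of_snd_snd_eq (P : Λ → I → G) {x y : I × G × Λ}
    (h : y.2.2 = x.2.2) : ∃ z, reesMul P z y = x :=
  ⟨(x.1, x.2.1 * (P x.2.2 y.1 * y.2.1)⁻¹, x.2.2), by ext <;> simp [h, mul_assoc]⟩

lemma reesMul_row_group_col {P : Λ → I → G} {iI : I} {lL : Λ} (h : P lL iI = 1)
    (i : I) (g : G) (l : Λ) :
    reesMul P (reesMul P (i, 1, lL) (iI, g, lL)) (iI, 1, l) = (i, g, l) := by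
  simp [reesMul, h]

variable (Q : M → J → H) (φ : I × G × Λ → J × H × M) (iI : I) (lL : Λ)

def reesRowMap (i : I) : J := (φ (i, 1, lL)).1

def reesColMap (l : Λ) : M := (φ (iI, 1, l)).2.2

def reesPivot : H := Q (reesColMap φ iI lL) (reesRowMap φ lL iI)

def reesRowFactor (i : I) : H :=
  (Q (reesColMap φ iI lL) (reesRowMap φ lL i))⁻¹ * reesPivot Q φ iI lL

def reesColFactor (l : Λ) : H := (Q (reesColMap φ iI l) (reesRowMap φ lL iI))⁻¹

lemma reesRowFactor_mem_closure (i : I) :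
    reesRowFactor Q φ iI lL i ∈ Subgroup.closure (reesEntries Q) :=
  mul_mem (inv_mem (Subgroup.subset_closure ⟨_, _, rfl⟩))
    (Subgroup.subset_closure ⟨_, _, rfl⟩)

lemma reesColFactor_mem_closure (l : Λ) :
    reesColFactor Q φ iI lL l ∈ Subgroup.closure (reesEntries Q) :=
  inv_mem (Subgroup.subset_closure ⟨_, _, rfl⟩)

variable {Q φ iI lL}

lemma closure_reesEntries_le_comap {P : Λ → I → G} {θ : G →* H} {ψI : I → J}
    {ψΛ : Λ → M} {u : I → H} {v : Λ → H} {K : Subgroup H}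
    (hθ : ∀ i l, θ (P l i) = v l * Q (ψΛ l) (ψI i) * u i) (hQ : reesEntries Q ⊆ K)
    (hu : ∀ i, u i ∈ K) (hv : ∀ l, v l ∈ K) :
    Subgroup.closure (reesEntries P) ≤ K.comap θ :=
  (Subgroup.closure_le _).2 <| by
    rintro _ ⟨l, i, rfl⟩
    rw [SetLike.mem_coe, Subgroup.mem_comap, hθ]
    exact mul_mem (mul_mem (hv l) (hQ ⟨_, _, rfl⟩)) (hu i)

namespace IsReesHom

variable {P : Λ → I → G}

lemma fst_eq (hφ : IsReesHom P Q φ) {x y : I × G × Λ} (h : x.1 = y.1) :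
    (φ x).1 = (φ y).1 := by
  obtain ⟨z, rfl⟩ := exists_reesMul_eq_of_fst_eq P h
  rw [hφ, reesMul_fst]

lemma snd_snd_eq (hφ : IsReesHom P Q φ) {x y : I × G × Λ} (h : x.2.2 = y.2.2) :
    (φ x).2.2 = (φ y).2.2 := by
  obtain ⟨z, rfl⟩ := exists_reesMul_eq_of_snd_snd_eq P h
  rw [hφ, reesMul_snd_snd]

lemma snd_fst_eq_of_idempotent (hφ : IsReesHom P Q φ) {x : I × G × Λ}
    (hx : reesMul P x x = x) : (φ x).2.1 = (Q (φ x).2.2 (φ x).1)⁻¹ :=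
  reesMul_self_eq_self_iff.1 (by rw [← hφ, hx])

lemma snd_fst_mul (hφ : IsReesHom P Q φ) (h : P lL iI = 1) (g g' : G) :
    (φ (iI, g * g', lL)).2.1 =
      (φ (iI, g, lL)).2.1 * reesPivot Q φ iI lL * (φ (iI, g', lL)).2.1 := by
  have hmul : (iI, g * g', lL) = reesMul P (iI, g, lL) (iI, g', lL) := by simp [reesMul, h]
  rw [hmul, hφ, reesMul_snd_fst, hφ.snd_snd_eq (x := (iI, g, lL)) (y := (iI, 1, lL)) rfl,
    hφ.fst_eq (x := (iI, g', lL)) (y := (iI, 1, lL)) rfl]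
  rfl

/-- Translation by the pivot `q₀` turns the `H`-class of `φ (iI, 1, lL)`,
whose multiplication is `h ⋆ h' = h q₀ h'`, into a copy of `H`. -/
def groupHom (hφ : IsReesHom P Q φ) (h : P lL iI = 1) : G →* H :=
  MonoidHom.mk' (fun g => (φ (iI, g, lL)).2.1 * reesPivot Q φ iI lL) fun g g' => by
    rw [hφ.snd_fst_mul h]
    group

lemma map_row (hφ : IsReesHom P Q φ) (hP : ∀ i, P lL i = 1) (i₀ i : I) :
    φ (i, 1, lL) = (reesRowMap φ lL i, (Q (reesColMap φ i₀ lL) (reesRowMap φ lL i))⁻¹,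
      reesColMap φ i₀ lL) := by
  have hcol : (φ (i, 1, lL)).2.2 = reesColMap φ i₀ lL := hφ.snd_snd_eq rfl
  have hidem := hφ.snd_fst_eq_of_idempotent (x := (i, 1, lL)) (by simp [reesMul, hP])
  rw [hcol] at hidem
  exact Prod.ext rfl (Prod.ext hidem hcol)

lemma map_col (hφ : IsReesHom P Q φ) (hP : ∀ l, P l iI = 1) (l₀ l : Λ) :
    φ (iI, 1, l) = (reesRowMap φ l₀ iI, (Q (reesColMap φ iI l) (reesRowMap φ l₀ iI))⁻¹,
      reesColMap φ iI l) := by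
  have hrow : (φ (iI, 1, l)).1 = reesRowMap φ l₀ iI := hφ.fst_eq rfl
  have hidem := hφ.snd_fst_eq_of_idempotent (x := (iI, 1, l)) (by simp [reesMul, hP])
  rw [hrow] at hidem
  exact Prod.ext hrow (Prod.ext hidem rfl)

lemma map_group (hφ : IsReesHom P Q φ) (h : P lL iI = 1) (g : G) :
    φ (iI, g, lL) = (reesRowMap φ lL iI, hφ.groupHom h g * (reesPivot Q φ iI lL)⁻¹,
      reesColMap φ iI lL) :=
  Prod.ext (hφ.fst_eq rfl) (Prod.ext (by simp [groupHom]) (hφ.snd_snd_eq rfl))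

lemma eq_reesMap (hφ : IsReesHom P Q φ) (hP₁ : ∀ i, P lL i = 1) (hP₂ : ∀ l, P l iI = 1) :
    φ = reesMap (hφ.groupHom (hP₁ iI)) (reesRowMap φ lL) (reesColMap φ iI)
      (reesRowFactor Q φ iI lL) (reesColFactor Q φ iI lL) := by
  funext ⟨i, g, l⟩
  conv_lhs => rw [← reesMul_row_group_col (hP₁ iI) i g l]
  rw [hφ, hφ, hφ.map_row hP₁ iI, hφ.map_group (hP₁ iI), hφ.map_col hP₂ lL]
  simp only [reesMap, reesMul, reesRowFactor, reesColFactor, reesPivot]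
  group

lemma groupHom_sandwich (hφ : IsReesHom P Q φ) (hP₁ : ∀ i, P lL i = 1)
    (hP₂ : ∀ l, P l iI = 1) (i : I) (l : Λ) :
    hφ.groupHom (hP₁ iI) (P l i) = reesColFactor Q φ iI lL l *
      Q (reesColMap φ iI l) (reesRowMap φ lL i) * reesRowFactor Q φ iI lL i := by
  have hmul : (iI, P l i, lL) = reesMul P (iI, 1, l) (i, 1, lL) := by simp [reesMul]
  change (φ (iI, P l i, lL)).2.1 * reesPivot Q φ iI lL = _
  rw [hmul, hφ, hφ.map_col hP₂ lL, hφ.map_row hP₁ iI]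
  simp only [reesMul_snd_fst, reesRowFactor, reesColFactor]
  group

end IsReesHom

end ReesHom

theorem rees_hom_restricts_to_idempotent_generated_general {G H I Λ J M : Type*} [Group G] [Group H]
    (P : Λ → I → G) (Q : M → J → H)
    (iI : I) (lL : Λ) (hP1 : ∀ j : I, P lL j = 1) (hP2 : ∀ m : Λ, P m iI = 1)
    (φ : I × G × Λ → J × H × M)
    (hφ : ∀ x y : I × G × Λ, φ (reesMul P x y) = reesMul Q (φ x) (φ y)) :
    ∃ (θ : G →* H) (ψI : I → J) (ψΛ : Λ → M) (u : I → H) (v : Λ → H),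
      (∀ (i : I) (l : Λ), θ (P l i) = v l * Q (ψΛ l) (ψI i) * u i) ∧
      φ = reesMap θ ψI ψΛ u v ∧
      (∀ i : I, u i ∈ Subgroup.closure (reesEntries Q)) ∧
      (∀ l : Λ, v l ∈ Subgroup.closure (reesEntries Q)) ∧
      (∀ g ∈ Subgroup.closure (reesEntries P), θ g ∈ Subgroup.closure (reesEntries Q)) ∧
      (∀ x : I × G × Λ, x.2.1 ∈ Subgroup.closure (reesEntries P) →
        (φ x).2.1 ∈ Subgroup.closure (reesEntries Q)) := by
  have hφ' : IsReesHom P Q φ := hφ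
  have hθ := hφ'.groupHom_sandwich hP1 hP2
  have hu := reesRowFactor_mem_closure Q φ iI lL
  have hv := reesColFactor_mem_closure Q φ iI lL
  have hθK := closure_reesEntries_le_comap hθ Subgroup.subset_closure hu hv
  refine ⟨_, _, _, _, _, hθ, hφ'.eq_reesMap hP1 hP2, hu, hv, fun _ hg => hθK hg,
    fun x hx => ?_⟩
  rw [hφ'.eq_reesMap hP1 hP2]
  exact mul_mem (mul_mem (hu _) (hθK hx)) (hv _)

/-- Every semigroup homomorphism `φ` between normalised Rees matrix
semigroups `S = M[G;I,Λ;P]` and `T = M[H;J,M;Q]` can be written as `[θ,ψ,u,v]` with all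
`u_i, v_λ ∈ ⟨H^Q⟩`, with `θ` mapping `⟨G^P⟩` into `⟨H^Q⟩`, and with `φ` restricting to a
homomorphism from `⟨E(S)⟩ = I × ⟨G^P⟩ × Λ` into `⟨E(T)⟩ = J × ⟨H^Q⟩ × M`. -/
theorem rees_hom_restricts_to_idempotent_generated {G H I Λ J M : Type*} [Group G] [Group H]
    (P : Λ → I → G) (Q : M → J → H)
    (iI : I) (lL : Λ) (hP1 : ∀ j : I, P lL j = 1) (hP2 : ∀ m : Λ, P m iI = 1)
    (jJ : J) (mM : M) (hQ1 : ∀ j : J, Q mM j = 1) (hQ2 : ∀ m : M, Q m jJ = 1)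
    (φ : I × G × Λ → J × H × M)
    (hφ : ∀ x y : I × G × Λ, φ (reesMul P x y) = reesMul Q (φ x) (φ y)) :
    ∃ (θ : G →* H) (ψI : I → J) (ψΛ : Λ → M) (u : I → H) (v : Λ → H),
      (∀ (i : I) (l : Λ), θ (P l i) = v l * Q (ψΛ l) (ψI i) * u i) ∧
      φ = reesMap θ ψI ψΛ u v ∧
      (∀ i : I, u i ∈ Subgroup.closure (reesEntries Q)) ∧
      (∀ l : Λ, v l ∈ Subgroup.closure (reesEntries Q)) ∧
      (∀ g ∈ Subgroup.closure (reesEntries P), θ g ∈ Subgroup.closure (reesEntries Q)) ∧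
      (∀ x : I × G × Λ, x.2.1 ∈ Subgroup.closure (reesEntries P) →
        (φ x).2.1 ∈ Subgroup.closure (reesEntries Q)) :=
  rees_hom_restricts_to_idempotent_generated_general P Q iI lL hP1 hP2 φ hφ
end

section
/- Let S = M[G;I,Λ;P] and T = M[H;J,M;Q] be Rees matrix semigroups and let φ = [θ,ψ,u,v] and φ' = [θ',ψ',u',v'] be two semigroup homomorphisms from S to T of the standard form. Then φ = φ' if and only if ψ_I = ψ'_I, ψ_Λ = ψ'_Λ, u_i·v_λ = u'_i·v'_λ for all i ∈ I and λ ∈ Λ, and for every i ∈ I and every g ∈ G, θ(g) = (u_i⁻¹u'_i)·θ'(g)·(u_i⁻¹u'_i)⁻¹. -/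
/-!
Two maps of the form `[θ,ψ,u,v]` agree iff they agree coordinatewise at every `(i, g, λ)`.
The outer coordinates give `ψ_I = ψ'_I` and `ψ_Λ = ψ'_Λ`; at `g = 1` the middle one gives
`u_i v_λ = u'_i v'_λ`, and once that holds, `u_i θ(g) v_λ = u'_i θ'(g) v'_λ` is, after substituting
`v_λ = u_i⁻¹ u'_i v'_λ` and cancelling `v'_λ`, exactly `θ(g) = c θ'(g) c⁻¹` with `c = u_i⁻¹ u'_i`.
-/

section ReesMap

variable {G H I Λ J M : Type*} [Group G] [Group H]

theorem mul_mul_eq_mul_mul_iff_of_mul_eq {a b a' b' x x' : H} (h : a * b = a' * b') :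
    a * x * b = a' * x' * b' ↔ x = a⁻¹ * a' * x' * (a⁻¹ * a')⁻¹ := by
  have hb : b = a⁻¹ * a' * b' := by rw [mul_assoc, ← h]; group
  rw [hb]
  constructor
  · intro hx
    calc x = a⁻¹ * (a * x * (a⁻¹ * a' * b')) * b'⁻¹ * a'⁻¹ * a := by group
      _ = a⁻¹ * a' * x' * (a⁻¹ * a')⁻¹ := by rw [hx]; group
  · rintro rfl
    group

theorem reesMap_eq_reesMap_iff [Nonempty I] [Nonempty Λ] {θ θ' : G →* H} {ψI ψI' : I → J}
    {ψΛ ψΛ' : Λ → M} {u u' : I → H} {v v' : Λ → H} :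
    reesMap θ ψI ψΛ u v = reesMap θ' ψI' ψΛ' u' v' ↔
      ψI = ψI' ∧ ψΛ = ψΛ' ∧ ∀ i g l, u i * θ g * v l = u' i * θ' g * v' l := by
  simp only [funext_iff, Prod.forall, reesMap, Prod.mk.injEq]
  constructor
  · intro h
    exact ⟨fun i => (h i 1 (Classical.arbitrary Λ)).1, fun l => (h (Classical.arbitrary I) 1 l).2.2,
      fun i g l => (h i g l).2.1⟩
  · rintro ⟨hI, hΛ, h⟩ i g l
    exact ⟨hI i, h i g l, hΛ l⟩

theorem forall_mul_map_mul_eq_iff [Nonempty Λ] {θ θ' : G →* H} {u u' : I → H}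
    {v v' : Λ → H} :
    (∀ i g l, u i * θ g * v l = u' i * θ' g * v' l) ↔
      (∀ i l, u i * v l = u' i * v' l) ∧
        ∀ i g, θ g = (u i)⁻¹ * u' i * θ' g * ((u i)⁻¹ * u' i)⁻¹ := by
  constructor
  · intro h
    have huv : ∀ i l, u i * v l = u' i * v' l := fun i l => by simpa using h i 1 l
    exact ⟨huv, fun i g =>
      (mul_mul_eq_mul_mul_iff_of_mul_eq (huv i (Classical.arbitrary Λ))).1 (h i g _)⟩
  · rintro ⟨huv, hθ⟩ i g l
    exact (mul_mul_eq_mul_mul_iff_of_mul_eq (huv i l)).2 (hθ i g)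

end ReesMap

theorem rees_hom_eq_iff_general {G H I Λ J M : Type*} [Group G] [Group H]
    [Nonempty I] [Nonempty Λ]
    (θ θ' : G →* H) (ψI ψI' : I → J) (ψΛ ψΛ' : Λ → M)
    (u u' : I → H) (v v' : Λ → H) :
    reesMap θ ψI ψΛ u v = reesMap θ' ψI' ψΛ' u' v' ↔
      ψI = ψI' ∧ ψΛ = ψΛ' ∧ (∀ (i : I) (l : Λ), u i * v l = u' i * v' l) ∧
      ∀ (i : I) (g : G), θ g = ((u i)⁻¹ * u' i) * θ' g * ((u i)⁻¹ * u' i)⁻¹ := by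
  rw [reesMap_eq_reesMap_iff, forall_mul_map_mul_eq_iff]

/-- Two semigroup homomorphisms `[θ,ψ,u,v]` and `[θ',ψ',u',v']` between
Rees matrix semigroups (with nonempty index sets) are equal iff `ψ_I = ψ'_I`,
`ψ_Λ = ψ'_Λ`, `u_i·v_λ = u'_i·v'_λ` for all `i, λ`, and for every `i` and `g`,
`θ(g) = (u_i⁻¹u'_i)·θ'(g)·(u_i⁻¹u'_i)⁻¹`. -/
theorem rees_hom_eq_iff {G H I Λ J M : Type*} [Group G] [Group H]
    [Nonempty I] [Nonempty Λ] [Nonempty J] [Nonempty M]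
    (P : Λ → I → G) (Q : M → J → H)
    (θ θ' : G →* H) (ψI ψI' : I → J) (ψΛ ψΛ' : Λ → M)
    (u u' : I → H) (v v' : Λ → H)
    (hc : ∀ (i : I) (l : Λ), θ (P l i) = v l * Q (ψΛ l) (ψI i) * u i)
    (hc' : ∀ (i : I) (l : Λ), θ' (P l i) = v' l * Q (ψΛ' l) (ψI' i) * u' i) :
    reesMap θ ψI ψΛ u v = reesMap θ' ψI' ψΛ' u' v' ↔
      ψI = ψI' ∧ ψΛ = ψΛ' ∧ (∀ (i : I) (l : Λ), u i * v l = u' i * v' l) ∧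
      ∀ (i : I) (g : G), θ g = ((u i)⁻¹ * u' i) * θ' g * ((u i)⁻¹ * u' i)⁻¹ :=
  rees_hom_eq_iff_general θ θ' ψI ψI' ψΛ ψΛ' u u' v v'
end

section
/- Let S = M[G;I,Λ;P] and T = M[H;J,M;Q] be Rees matrix semigroups in which every entry of P equals the identity ε_G of G and every entry of Q equals the identity ε_H of H. Then for every group homomorphism θ : G → H and all maps ψ_I : I → J, ψ_Λ : Λ → M, the map φ(i,g,λ) = (ψ_I(i), θ(g), ψ_Λ(λ)) is a semigroup homomorphism from S to T; conversely, every semigroup homomorphism from S to T has this form. -/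
/-! With all sandwich entries trivial, the product is `(i,g,λ)(j,h,μ) = (i,gh,μ)`. For a
homomorphism `φ` and `x = (i,g,λ)`, the identity `x = (i,1,λ₀)x` shows that the first coordinate
of `φ x` is that of `φ (i,1,λ₀)`; dually `x = x(i₀,1,λ)` pins down the last coordinate. The middle
coordinate is multiplicative, hence sends each idempotent `(i,1,λ)` to `1`, and the factorisation
`(i,g,λ) = (i,1,λ)(i₀,g,λ₀)(i₀,1,λ)` shows that it depends on `g` alone. -/

section RectangularGroup

variable {G H I Λ J M : Type*} [Group G] [Group H] {P : Λ → I → G} {Q : M → J → H}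

theorem reesMul_of_forall_eq_one (hP : ∀ l i, P l i = 1) (x y : I × G × Λ) :
    reesMul P x y = (x.1, x.2.1 * y.2.1, y.2.2) := by
  simp only [reesMul, hP, mul_one]

theorem reesMul_one_left (hP : ∀ l i, P l i = 1) (i j : I) (g : G) (l m : Λ) :
    reesMul P (i, 1, l) (j, g, m) = (i, g, m) := by
  rw [reesMul_of_forall_eq_one hP, one_mul]

theorem reesMul_one_right (hP : ∀ l i, P l i = 1) (i j : I) (g : G) (l m : Λ) :
    reesMul P (i, g, l) (j, 1, m) = (i, g, m) := by
  rw [reesMul_of_forall_eq_one hP, mul_one]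

variable {φ : I × G × Λ → J × H × M} (hφ : ∀ x y, φ (reesMul P x y) = reesMul Q (φ x) (φ y))
include hφ

theorem fst_eq_of_map_reesMul (hP : ∀ l i, P l i = 1) (i : I) (g : G) (l l₀ : Λ) :
    (φ (i, g, l)).1 = (φ (i, 1, l₀)).1 := by
  rw [← reesMul_one_left hP i i g l₀ l]
  rw [hφ]
  rfl

theorem snd_snd_eq_of_map_reesMul (hP : ∀ l i, P l i = 1) (i i₀ : I) (g : G) (l : Λ) :
    (φ (i, g, l)).2.2 = (φ (i₀, 1, l)).2.2 := by
  rw [← reesMul_one_right hP i i₀ g l l]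
  rw [hφ]
  rfl

theorem snd_fst_map_reesMul (hQ : ∀ m j, Q m j = 1) (x y : I × G × Λ) :
    (φ (reesMul P x y)).2.1 = (φ x).2.1 * (φ y).2.1 := by
  rw [hφ, reesMul_of_forall_eq_one hQ]

theorem snd_fst_map_idempotent (hP : ∀ l i, P l i = 1) (hQ : ∀ m j, Q m j = 1) (i : I) (l : Λ) :
    (φ (i, 1, l)).2.1 = 1 := by
  have h := snd_fst_map_reesMul hφ hQ (i, 1, l) (i, 1, l)
  rw [reesMul_one_left hP] at h
  exact left_eq_mul.mp h

theorem snd_fst_eq_of_map_reesMul (hP : ∀ l i, P l i = 1) (hQ : ∀ m j, Q m j = 1)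
    (i i₀ : I) (g : G) (l l₀ : Λ) : (φ (i, g, l)).2.1 = (φ (i₀, g, l₀)).2.1 :=
  calc (φ (i, g, l)).2.1
      = (φ (i, 1, l)).2.1 * (φ (i₀, g, l₀)).2.1 * (φ (i₀, 1, l)).2.1 := by
        rw [← snd_fst_map_reesMul hφ hQ, ← snd_fst_map_reesMul hφ hQ, reesMul_one_left hP,
          reesMul_one_right hP]
    _ = (φ (i₀, g, l₀)).2.1 := by
        rw [snd_fst_map_idempotent hφ hP hQ, snd_fst_map_idempotent hφ hP hQ, one_mul, mul_one]

end RectangularGroup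

theorem rees_hom_trivial_sandwich_general {G H I Λ J M : Type*} [Group G] [Group H]
    [Nonempty I] [Nonempty Λ]
    (P : Λ → I → G) (Q : M → J → H)
    (hP : ∀ (l : Λ) (i : I), P l i = 1) (hQ : ∀ (m : M) (j : J), Q m j = 1) :
    (∀ (θ : G →* H) (ψI : I → J) (ψΛ : Λ → M) (x y : I × G × Λ),
      ((fun z : I × G × Λ => ((ψI z.1, θ z.2.1, ψΛ z.2.2) : J × H × M)) (reesMul P x y)) =
        reesMul Q ((fun z : I × G × Λ => ((ψI z.1, θ z.2.1, ψΛ z.2.2) : J × H × M)) x)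
          ((fun z : I × G × Λ => ((ψI z.1, θ z.2.1, ψΛ z.2.2) : J × H × M)) y)) ∧
    (∀ φ : I × G × Λ → J × H × M,
      (∀ x y : I × G × Λ, φ (reesMul P x y) = reesMul Q (φ x) (φ y)) →
      ∃ (θ : G →* H) (ψI : I → J) (ψΛ : Λ → M),
        ∀ z : I × G × Λ, φ z = (ψI z.1, θ z.2.1, ψΛ z.2.2)) := by
  refine ⟨fun θ ψI ψΛ x y => ?_, fun φ hφ => ?_⟩
  · simp only [reesMul_of_forall_eq_one hP, reesMul_of_forall_eq_one hQ, map_mul]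
  obtain ⟨i₀⟩ := ‹Nonempty I›
  obtain ⟨l₀⟩ := ‹Nonempty Λ›
  let θ : G →* H := MonoidHom.mk' (fun g => (φ (i₀, g, l₀)).2.1) fun g h => by
    rw [← snd_fst_map_reesMul hφ hQ, reesMul_of_forall_eq_one hP]
  refine ⟨θ, fun i => (φ (i, 1, l₀)).1, fun l => (φ (i₀, 1, l)).2.2, ?_⟩
  rintro ⟨i, g, l⟩
  exact Prod.ext (fst_eq_of_map_reesMul hφ hP i g l l₀)
    (Prod.ext (snd_fst_eq_of_map_reesMul hφ hP hQ i i₀ g l l₀)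
      (snd_snd_eq_of_map_reesMul hφ hP i i₀ g l))

/-- If the sandwich matrices `P` and `Q` have all entries equal to the
identity (so both Rees matrix semigroups are rectangular groups), then for every group
homomorphism `θ : G → H` and maps `ψ_I : I → J`, `ψ_Λ : Λ → M` the map
`(i,g,λ) ↦ (ψ_I(i), θ(g), ψ_Λ(λ))` is a semigroup homomorphism `S → T`; conversely,
every semigroup homomorphism from `S` to `T` has this form. -/
theorem rees_hom_trivial_sandwich {G H I Λ J M : Type*} [Group G] [Group H]
    [Nonempty I] [Nonempty Λ] [Nonempty J] [Nonempty M]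
    (P : Λ → I → G) (Q : M → J → H)
    (hP : ∀ (l : Λ) (i : I), P l i = 1) (hQ : ∀ (m : M) (j : J), Q m j = 1) :
    (∀ (θ : G →* H) (ψI : I → J) (ψΛ : Λ → M) (x y : I × G × Λ),
      ((fun z : I × G × Λ => ((ψI z.1, θ z.2.1, ψΛ z.2.2) : J × H × M)) (reesMul P x y)) =
        reesMul Q ((fun z : I × G × Λ => ((ψI z.1, θ z.2.1, ψΛ z.2.2) : J × H × M)) x)
          ((fun z : I × G × Λ => ((ψI z.1, θ z.2.1, ψΛ z.2.2) : J × H × M)) y)) ∧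
    (∀ φ : I × G × Λ → J × H × M,
      (∀ x y : I × G × Λ, φ (reesMul P x y) = reesMul Q (φ x) (φ y)) →
      ∃ (θ : G →* H) (ψI : I → J) (ψΛ : Λ → M),
        ∀ z : I × G × Λ, φ z = (ψI z.1, θ z.2.1, ψΛ z.2.2)) :=
  rees_hom_trivial_sandwich_general P Q hP hQ
end

section
/- Let G be a group, I and Λ nonempty sets, P : Λ × I → G a matrix, and S = M[G;I,Λ;P] the associated Rees matrix semigroup, equipped with its unary operation x ↦ x' (the inverse of x in its maximal subgroup). Then S is finitely generated as a unary semigroup — i.e. there is a finite subset X ⊆ S whose closure under multiplication and x ↦ x' is all of S — if and only if G is a finitely generated group and both I and Λ are finite. -/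
/-!
Every element of the closure of `X` has its row among the rows of `X`, its column among the
columns of `X`, and its group coordinate in the subgroup generated by the group coordinates of
`X` and the entries of `P`, since multiplication and `x ↦ x'` only ever insert entries of `P`;
so a finite `X` forces `I`, `Λ` finite and `G` finitely generated. Conversely,
`g ↦ (i, g P(λ,i)⁻¹, λ)` is an isomorphism of `G` onto the maximal subgroup `H_{iλ}`, so the
images of a finite generating set of `G` together with `1`, over all `(i, λ)`, generate every
`H_{iλ}` and hence `S`.
-/

section Rees

theorem reesEntries_finite {G I Λ : Type*} (P : Λ → I → G) [Finite I] [Finite Λ] :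
    (reesEntries P).Finite :=
  (Set.finite_range fun p : Λ × I => P p.1 p.2).subset fun _ ⟨l, i, hg⟩ => ⟨(l, i), hg⟩

variable {G I Λ : Type*} [Group G] {P : Λ → I → G} {X : Set (I × G × Λ)} {s : I × G × Λ}

theorem CSClosure.fst_mem_image (h : CSClosure (reesMul P) (reesInv P) X s) :
    s.1 ∈ Prod.fst '' X := by
  induction h with
  | base hx => exact ⟨_, hx, rfl⟩
  | mul _ _ ihx _ => exact ihx
  | inv _ ih => exact ih

theorem CSClosure.snd_snd_mem_image (h : CSClosure (reesMul P) (reesInv P) X s) :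
    s.2.2 ∈ (fun t : I × G × Λ => t.2.2) '' X := by
  induction h with
  | base hx => exact ⟨_, hx, rfl⟩
  | mul _ _ _ ihy => exact ihy
  | inv _ ih => exact ih

theorem CSClosure.snd_fst_mem_closure (h : CSClosure (reesMul P) (reesInv P) X s) :
    s.2.1 ∈ Subgroup.closure ((fun t : I × G × Λ => t.2.1) '' X ∪ reesEntries P) := by
  have hP : ∀ l i,
      P l i ∈ Subgroup.closure ((fun t : I × G × Λ => t.2.1) '' X ∪ reesEntries P) :=
    fun l i => Subgroup.subset_closure (Or.inr ⟨l, i, rfl⟩)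
  induction h with
  | base hx => exact Subgroup.subset_closure (Or.inl ⟨_, hx, rfl⟩)
  | mul _ _ ihx ihy => exact mul_mem (mul_mem ihx (hP _ _)) ihy
  | inv _ ih => exact mul_mem (mul_mem (inv_mem (hP _ _)) (inv_mem ih)) (inv_mem (hP _ _))

/-- For fixed `i, l` this is an isomorphism of `G` onto the maximal subgroup `H_{il}`. -/
def reesToMaxSubgroup (P : Λ → I → G) (i : I) (l : Λ) (g : G) : I × G × Λ :=
  (i, g * (P l i)⁻¹, l)

theorem reesMul_reesToMaxSubgroup (i : I) (l : Λ) (a b : G) :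
    reesMul P (reesToMaxSubgroup P i l a) (reesToMaxSubgroup P i l b) =
      reesToMaxSubgroup P i l (a * b) := by
  simp [reesMul, reesToMaxSubgroup, mul_assoc]

theorem reesInv_reesToMaxSubgroup (i : I) (l : Λ) (a : G) :
    reesInv P (reesToMaxSubgroup P i l a) = reesToMaxSubgroup P i l a⁻¹ := by
  simp [reesInv, reesToMaxSubgroup]

theorem reesToMaxSubgroup_mul_sandwich (i : I) (l : Λ) (g : G) :
    reesToMaxSubgroup P i l (g * P l i) = (i, g, l) := by
  simp [reesToMaxSubgroup]

theorem CSClosure.reesToMaxSubgroup_of_mem_closure {A : Set G} {i : I} {l : Λ}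
    (h1 : CSClosure (reesMul P) (reesInv P) X (reesToMaxSubgroup P i l 1))
    (hA : ∀ a ∈ A, CSClosure (reesMul P) (reesInv P) X (reesToMaxSubgroup P i l a))
    {g : G} (hg : g ∈ Subgroup.closure A) :
    CSClosure (reesMul P) (reesInv P) X (reesToMaxSubgroup P i l g) := by
  induction hg using Subgroup.closure_induction with
  | mem a ha => exact hA a ha
  | one => exact h1
  | mul a b _ _ ha hb => exact reesMul_reesToMaxSubgroup i l a b ▸ ha.mul hb
  | inv a _ ha => exact reesInv_reesToMaxSubgroup i l a ▸ ha.inv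

end Rees

/-- A Rees matrix semigroup `M[G;I,Λ;P]` is finitely generated as a
unary semigroup (under multiplication and the operation `x ↦ x'` of inversion in the
maximal subgroup) if and only if `G` is a finitely generated group and both `I` and `Λ`
are finite. -/
theorem rees_fg_iff {G I Λ : Type*} [Group G] [Nonempty I] [Nonempty Λ]
    (P : Λ → I → G) :
    (∃ X : Finset (I × G × Λ),
      ∀ s : I × G × Λ, CSClosure (reesMul P) (reesInv P) (X : Set (I × G × Λ)) s) ↔
    Group.FG G ∧ Finite I ∧ Finite Λ := by
  constructor
  · rintro ⟨X, hX⟩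
    obtain ⟨i₀⟩ := ‹Nonempty I›
    obtain ⟨l₀⟩ := ‹Nonempty Λ›
    have hI : Finite I := Set.finite_univ_iff.mp <|
      (X.finite_toSet.image _).subset fun i _ => (hX (i, 1, l₀)).fst_mem_image
    have hΛ : Finite Λ := Set.finite_univ_iff.mp <|
      (X.finite_toSet.image _).subset fun l _ => (hX (i₀, 1, l)).snd_snd_mem_image
    refine ⟨Group.fg_iff.mpr ⟨(fun t : I × G × Λ => t.2.1) '' X ∪ reesEntries P, ?_,
      (X.finite_toSet.image _).union (reesEntries_finite P)⟩, hI, hΛ⟩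
    exact eq_top_iff.mpr fun g _ => (hX (i₀, g, l₀)).snd_fst_mem_closure
  · rintro ⟨hG, hI, hΛ⟩
    obtain ⟨A, hAtop, hAfin⟩ := Group.fg_iff.mp hG
    have : Finite ↥(insert (1 : G) A) := (hAfin.insert 1).to_subtype
    set X : Set (I × G × Λ) := Set.range fun p : I × ↥(insert (1 : G) A) × Λ =>
      reesToMaxSubgroup P p.1 p.2.2 p.2.1
    have hXfin : X.Finite := Set.finite_range _
    refine ⟨hXfin.toFinset, fun ⟨i, g, l⟩ => ?_⟩
    rw [Set.Finite.coe_toFinset, ← reesToMaxSubgroup_mul_sandwich]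
    have hgen : ∀ a ∈ insert 1 A,
        CSClosure (reesMul P) (reesInv P) X (reesToMaxSubgroup P i l a) :=
      fun a ha => .base ⟨(i, ⟨a, ha⟩, l), rfl⟩
    exact CSClosure.reesToMaxSubgroup_of_mem_closure (hgen 1 (Set.mem_insert _ _))
      (fun a ha => hgen a (Set.mem_insert_of_mem _ ha)) (hAtop ▸ Subgroup.mem_top _)
end
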